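/- arXiv:1806.02379 — 4 statements merged into one kernel-verified Lean document; each statement's English description precedes it below -/
import Mathlib

section
/- For every vector field φ in the closure of smooth compactly supported fields in the graph norm of divergence (i.e. φ ∈ D̊(Ω)) with div φ ∈ L²(Ω), each component φ_i satisfies |∫_Ω φ_i dx| ≤ ‖div φ‖_{L¹(Ω)} · (length of Ω in direction i); in particular if div φ = 0 then ∫_Ω φ_i dx = 0 for all i. -/
open MeasureTheory Filter Topology

noncomputable section

/-- Vectors in `ℝ³`. -/
abbrev V3 := Fin 3 → ℝ

/-- The open rectangular cuboid `(0,l₁)×(0,l₂)×(0,l₃)`. -/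
def cuboid (l : Fin 3 → ℝ) : Set V3 := Set.univ.pi fun i => Set.Ioo 0 (l i)

/-- The slab `Ω_i = {x ∈ Ω : a < x_i < b}`. -/
def slab (Ω : Set V3) (i : Fin 3) (a b : ℝ) : Set V3 :=
  {x ∈ Ω | a < x i ∧ x i < b}

/-- The beam `Ω_{jk} = {x ∈ Ω : a_j < x_j < b_j, a_k < x_k < b_k}`. -/
def beam (Ω : Set V3) (j k : Fin 3) (aj bj ak bk : ℝ) : Set V3 :=
  {x ∈ Ω | (aj < x j ∧ x j < bj) ∧ (ak < x k ∧ x k < bk)}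

/-- Partial derivative `∂_j φ_i`. -/
def pder (i j : Fin 3) (φ : V3 → V3) (x : V3) : ℝ :=
  fderiv ℝ (fun y => φ y i) x (Pi.single j 1)

/-- Divergence of a (smooth) vector field. -/
def div3 (φ : V3 → V3) (x : V3) : ℝ := pder 0 0 φ x + pder 1 1 φ x + pder 2 2 φ x

/-- Rotation (curl) of a (smooth) vector field. -/
def rot3 (φ : V3 → V3) (x : V3) : V3 :=
  ![pder 2 1 φ x - pder 1 2 φ x,
    pder 0 2 φ x - pder 2 0 φ x,
    pder 1 0 φ x - pder 0 1 φ x]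

/-- Scalar test functions: smooth with compact support contained in `Ω`. -/
def TestFun (Ω : Set V3) (ψ : V3 → ℝ) : Prop :=
  ContDiff ℝ (⊤ : ℕ∞) ψ ∧ HasCompactSupport ψ ∧ tsupport ψ ⊆ Ω

/-- Vector test fields: smooth with compact support contained in `Ω`. -/
def TestField (Ω : Set V3) (φ : V3 → V3) : Prop :=
  ContDiff ℝ (⊤ : ℕ∞) φ ∧ HasCompactSupport φ ∧ tsupport φ ⊆ Ω

/-- `L²(Ω)` convergence of a sequence of scalar functions. -/
def L2TendstoS (Ω : Set V3) (f : ℕ → V3 → ℝ) (g : V3 → ℝ) : Prop :=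
  Tendsto (fun n => ∫ x in Ω, (f n x - g x) ^ 2) atTop (𝓝 0)

/-- `L²(Ω)` convergence of a sequence of vector fields. -/
def L2TendstoV (Ω : Set V3) (f : ℕ → V3 → V3) (g : V3 → V3) : Prop :=
  Tendsto (fun n => ∫ x in Ω, ∑ i : Fin 3, (f n x i - g x i) ^ 2) atTop (𝓝 0)

/-- `φ ∈ D̊(Ω)` with (weak) divergence `dφ`: `φ` is the limit of test fields in
the graph norm of the divergence. -/
def MemDc (Ω : Set V3) (φ : V3 → V3) (dφ : V3 → ℝ) : Prop :=
  ∃ φs : ℕ → V3 → V3, (∀ n, TestField Ω (φs n)) ∧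
    L2TendstoV Ω φs φ ∧ L2TendstoS Ω (fun n => div3 (φs n)) dφ

/-- `φ ∈ R̊(Ω)` with (weak) rotation `rφ`: `φ` is the limit of test fields in
the graph norm of the rotation. -/
def MemRc (Ω : Set V3) (φ : V3 → V3) (rφ : V3 → V3) : Prop :=
  ∃ φs : ℕ → V3 → V3, (∀ n, TestField Ω (φs n)) ∧
    L2TendstoV Ω φs φ ∧ L2TendstoV Ω (fun n => rot3 (φs n)) rφ

/-- `φ ∈ D(Ω)` with weak divergence `g`, via integration by parts. -/
def HasWeakDiv (Ω : Set V3) (φ : V3 → V3) (g : V3 → ℝ) : Prop :=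
  ∀ ψ, TestFun Ω ψ →
    ∫ x in Ω, ∑ i : Fin 3, φ x i * fderiv ℝ ψ x (Pi.single i 1) = - ∫ x in Ω, g x * ψ x

/-- `φ ∈ R(Ω)` with weak rotation `g`, via integration by parts. -/
def HasWeakCurl (Ω : Set V3) (φ g : V3 → V3) : Prop :=
  ∀ ψ, TestField Ω ψ →
    ∫ x in Ω, ∑ i : Fin 3, φ x i * rot3 ψ x i = ∫ x in Ω, ∑ i : Fin 3, g x i * ψ x i

/-- `φ ∈ H¹(Ω)`-type membership: `g` is the weak gradient of the scalar function `φ`. -/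
def HasWeakGrad (Ω : Set V3) (φ : V3 → ℝ) (g : V3 → V3) : Prop :=
  ∀ i : Fin 3, ∀ ψ, TestFun Ω ψ →
    ∫ x in Ω, φ x * fderiv ℝ ψ x (Pi.single i 1) = - ∫ x in Ω, g x i * ψ x

/-- `φ ∈ H̊¹(Ω)` with weak gradient `g`: limit of scalar test functions in the `H¹` norm. -/
def MemH10 (Ω : Set V3) (φ : V3 → ℝ) (g : V3 → V3) : Prop :=
  ∃ φs : ℕ → V3 → ℝ, (∀ n, TestFun Ω (φs n)) ∧ L2TendstoS Ω φs φ ∧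
    L2TendstoV Ω (fun n x i => fderiv ℝ (φs n) x (Pi.single i 1)) g

/-- Membership in `L²(Ω)`. -/
def L2 (Ω : Set V3) {E : Type*} [NormedAddCommGroup E] [MeasurableSpace E] (f : V3 → E) : Prop :=
  MemLp f 2 (volume.restrict Ω)

/-- Euclidean diameter of the projection of `Ω` to the `(e_j,e_k)`-plane. -/
def projDiam (Ω : Set V3) (j k : Fin 3) : ℝ :=
  Metric.diam ((fun x => ((WithLp.equiv 2 (Fin 2 → ℝ)).symm ![x j, x k] :
    EuclideanSpace ℝ (Fin 2))) '' Ω)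

/-- Euclidean diameter of a subset of `ℝ³`. -/
def eDiam (Ω : Set V3) : ℝ :=
  Metric.diam ((fun x => ((WithLp.equiv 2 (Fin 3 → ℝ)).symm x :
    EuclideanSpace ℝ (Fin 3))) '' Ω)

/-- The set of admissible constants in the Maxwell inequality for `R̊ ∩ D₀`. -/
def maxwellSet1 (Ω : Set V3) : Set ℝ :=
  {c | 0 ≤ c ∧ ∀ φ rφ : V3 → V3, MemRc Ω φ rφ → HasWeakDiv Ω φ 0 → L2 Ω φ → L2 Ω rφ →
      ∫ x in Ω, ∑ i : Fin 3, (φ x i) ^ 2 ≤ c ^ 2 * ∫ x in Ω, ∑ i : Fin 3, (rφ x i) ^ 2}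

/-- The set of admissible constants in the Maxwell inequality for `R ∩ D̊₀`. -/
def maxwellSet2 (Ω : Set V3) : Set ℝ :=
  {c | 0 ≤ c ∧ ∀ φ rφ : V3 → V3, HasWeakCurl Ω φ rφ → MemDc Ω φ 0 → L2 Ω φ → L2 Ω rφ →
      ∫ x in Ω, ∑ i : Fin 3, (φ x i) ^ 2 ≤ c ^ 2 * ∫ x in Ω, ∑ i : Fin 3, (rφ x i) ^ 2}

/-- The best (smallest) Maxwell constant `c_{m,1}`. -/
def cm1 (Ω : Set V3) : ℝ := sInf (maxwellSet1 Ω)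

/-- The best (smallest) Maxwell constant `c_{m,2}`. -/
def cm2 (Ω : Set V3) : ℝ := sInf (maxwellSet2 Ω)

/-- The best specialized Poincaré constant `c_{p,i}` for functions with zero mean on
all slabs perpendicular to `e_i` (relative to a cuboid `(0,l₁)×(0,l₂)×(0,l₃) ⊇ Ω`). -/
def cpConst (Ω : Set V3) (l : Fin 3 → ℝ) (i : Fin 3) : ℝ :=
  sInf {c | 0 ≤ c ∧ ∀ (φ : V3 → ℝ) (g : V3 → V3), HasWeakGrad Ω φ g → L2 Ω φ → L2 Ω g →
    (∀ α β : ℝ, 0 ≤ α → α < β → β ≤ l i → ∫ x in slab Ω i α β, φ x = 0) →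
    ∫ x in Ω, (φ x) ^ 2 ≤ c ^ 2 * ∫ x in Ω, ∑ m : Fin 3, (g x m) ^ 2}

/-- The best Friedrichs constant for `H̊¹(Ω)`. -/
def cfConst (Ω : Set V3) : ℝ :=
  sInf {c | 0 ≤ c ∧ ∀ (φ : V3 → ℝ) (g : V3 → V3), MemH10 Ω φ g → L2 Ω φ → L2 Ω g →
    ∫ x in Ω, (φ x) ^ 2 ≤ c ^ 2 * ∫ x in Ω, ∑ m : Fin 3, (g x m) ^ 2}

section AuxStmt0

lemma aux_cs_l1 (μ : Measure V3) [IsFiniteMeasure μ] (g : V3 → ℝ) (hg : MemLp g 2 μ) :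
    ∫ x, |g x| ∂μ ≤ Real.sqrt ((μ Set.univ).toReal) * Real.sqrt (∫ x, (g x) ^ 2 ∂μ) := by
  have hpq : Real.HolderConjugate 2 2 := Real.holderConjugate_iff.mpr ⟨one_lt_two, by norm_num⟩
  have hmem : MemLp (fun x => |g x|) (ENNReal.ofReal 2) μ := by
    simpa [Real.norm_eq_abs, ENNReal.ofReal_ofNat] using hg.norm
  have hone : MemLp (fun _ : V3 => (1:ℝ)) (ENNReal.ofReal 2) μ := by
    simpa [ENNReal.ofReal_ofNat] using memLp_const (μ := μ) (1:ℝ)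
  have h := integral_mul_le_Lp_mul_Lq_of_nonneg (μ := μ) hpq
    (Filter.Eventually.of_forall fun x => abs_nonneg (g x))
    (Filter.Eventually.of_forall fun _ => zero_le_one) hmem hone
  simp only [mul_one, Real.one_rpow, integral_const, smul_eq_mul] at h
  have h1 : (∫ x, |g x| ^ (2:ℝ) ∂μ) = ∫ x, (g x) ^ 2 ∂μ := by
    refine integral_congr_ae (Filter.Eventually.of_forall fun x => ?_)
    show |g x| ^ (2:ℝ) = g x ^ 2
    rw [show ((2:ℝ)) = ((2:ℕ):ℝ) by norm_num, Real.rpow_natCast, sq_abs]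
  rw [h1] at h
  calc ∫ x, |g x| ∂μ ≤ (∫ x, (g x) ^ 2 ∂μ) ^ ((1:ℝ)/2) * ((μ Set.univ).toReal) ^ ((1:ℝ)/2) := h
  _ = _ := by rw [mul_comm, Real.sqrt_eq_rpow, Real.sqrt_eq_rpow]

lemma aux_l1_tendsto (μ : Measure V3) [IsFiniteMeasure μ] (f : ℕ → V3 → ℝ) (g : V3 → ℝ)
    (hf : ∀ n, MemLp (f n) 2 μ) (hg : MemLp g 2 μ)
    (h : Tendsto (fun n => ∫ x, (f n x - g x) ^ 2 ∂μ) atTop (𝓝 0)) :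
    Tendsto (fun n => ∫ x, |f n x - g x| ∂μ) atTop (𝓝 0) := by
  have hb : ∀ n, ∫ x, |f n x - g x| ∂μ ≤
      Real.sqrt ((μ Set.univ).toReal) * Real.sqrt (∫ x, (f n x - g x) ^ 2 ∂μ) :=
    fun n => aux_cs_l1 μ _ ((hf n).sub hg)
  have hnn : ∀ n, 0 ≤ ∫ x, |f n x - g x| ∂μ :=
    fun n => integral_nonneg fun x => abs_nonneg _
  have hlim : Tendsto (fun n => Real.sqrt ((μ Set.univ).toReal) *
      Real.sqrt (∫ x, (f n x - g x) ^ 2 ∂μ)) atTop (𝓝 0) := by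
    have := (Real.continuous_sqrt.tendsto 0).comp h
    simpa using this.const_mul (Real.sqrt ((μ Set.univ).toReal))
  exact squeeze_zero hnn hb hlim

lemma aux_int_tendsto (μ : Measure V3) [IsFiniteMeasure μ] (f : ℕ → V3 → ℝ) (g : V3 → ℝ)
    (hf : ∀ n, MemLp (f n) 2 μ) (hg : MemLp g 2 μ)
    (h : Tendsto (fun n => ∫ x, (f n x - g x) ^ 2 ∂μ) atTop (𝓝 0)) :
    Tendsto (fun n => ∫ x, f n x ∂μ) atTop (𝓝 (∫ x, g x ∂μ)) ∧
    Tendsto (fun n => ∫ x, |f n x| ∂μ) atTop (𝓝 (∫ x, |g x| ∂μ)) := by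
  have hl1 := aux_l1_tendsto μ f g hf hg h
  have hfi : ∀ n, Integrable (f n) μ := fun n => (hf n).integrable one_le_two
  have hgi : Integrable g μ := hg.integrable one_le_two
  constructor
  · rw [tendsto_iff_dist_tendsto_zero]
    refine squeeze_zero (fun n => dist_nonneg) (fun n => ?_) hl1
    rw [Real.dist_eq, ← integral_sub (hfi n) hgi]
    simpa [Real.norm_eq_abs] using norm_integral_le_integral_norm (μ := μ) (fun x => f n x - g x)
  · rw [tendsto_iff_dist_tendsto_zero]
    refine squeeze_zero (fun n => dist_nonneg) (fun n => ?_) hl1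
    rw [Real.dist_eq, ← integral_sub (hfi n).abs hgi.abs]
    have habs : |∫ x, (|f n x| - |g x|) ∂μ| ≤ ∫ x, abs (|f n x| - |g x|) ∂μ := by
      simpa [Real.norm_eq_abs] using
        norm_integral_le_integral_norm (μ := μ) (fun x => |f n x| - |g x|)
    refine habs.trans ?_
    refine integral_mono ((hfi n).abs.sub hgi.abs).abs ((hfi n).sub hgi).abs ?_
    exact fun x => abs_abs_sub_abs_le_abs_sub _ _

lemma aux_pder_eq (ϑ : V3 → V3) (hϑ : ContDiff ℝ (⊤ : ℕ∞) ϑ) (j k : Fin 3) (x : V3) :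
    pder j k ϑ x = fderiv ℝ ϑ x (Pi.single k 1) j := by
  have hd : HasFDerivAt ϑ (fderiv ℝ ϑ x) x :=
    (hϑ.differentiable (by simp) x).hasFDerivAt
  have : HasFDerivAt (fun y => ϑ y j)
      ((ContinuousLinearMap.proj j).comp (fderiv ℝ ϑ x)) x :=
    ((ContinuousLinearMap.proj (R := ℝ) (φ := fun _ : Fin 3 => ℝ) j).hasFDerivAt.comp x hd :
      HasFDerivAt ((ContinuousLinearMap.proj j) ∘ ϑ) _ x)
  rw [pder, this.fderiv]; rfl

lemma aux_div3_eq (ϑ : V3 → V3) (hϑ : ContDiff ℝ (⊤ : ℕ∞) ϑ) (x : V3) :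
    div3 ϑ x = ∑ j : Fin 3, fderiv ℝ ϑ x (Pi.single j 1) j := by
  rw [div3, Fin.sum_univ_three, aux_pder_eq ϑ hϑ, aux_pder_eq ϑ hϑ, aux_pder_eq ϑ hϑ]

lemma aux_div3_continuous (ϑ : V3 → V3) (hϑ : ContDiff ℝ (⊤ : ℕ∞) ϑ) : Continuous (div3 ϑ) := by
  have hfd : Continuous (fderiv ℝ ϑ) := hϑ.continuous_fderiv (by simp)
  have hc : ∀ j : Fin 3, Continuous (fun x => fderiv ℝ ϑ x (Pi.single j 1) j) := by
    intro j
    exact (continuous_apply j).comp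
      ((ContinuousLinearMap.apply ℝ V3 (Pi.single j 1)).continuous.comp hfd)
  have heq : div3 ϑ = fun x => ∑ j : Fin 3, fderiv ℝ ϑ x (Pi.single j 1) j :=
    funext (aux_div3_eq ϑ hϑ)
  rw [heq]
  exact continuous_finset_sum _ fun j _ => hc j

lemma aux_div3_zero_outside (ϑ : V3 → V3) (x : V3) (hx : x ∉ tsupport ϑ) : div3 ϑ x = 0 := by
  have h : ∀ j : Fin 3, pder j j ϑ x = 0 := by
    intro j
    have hsub : tsupport (fun y => ϑ y j) ⊆ tsupport ϑ :=
      closure_mono (fun y hy => by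
        simp only [Function.mem_support] at hy ⊢; exact fun h => hy (by rw [h]; rfl))
    have hz : fderiv ℝ (fun y => ϑ y j) x = 0 := by
      by_contra h0
      exact hx (hsub (support_fderiv_subset ℝ (Function.mem_support.mpr h0)))
    rw [pder, hz]; rfl
  rw [div3, h 0, h 1, h 2]; ring

lemma aux_hcs_mono (ϑ : V3 → V3) (hcs : HasCompactSupport ϑ) (g : V3 → ℝ)
    (hsub : Function.support g ⊆ tsupport ϑ) : HasCompactSupport g :=
  IsCompact.of_isClosed_subset hcs isClosed_closure
    (closure_minimal hsub (isClosed_tsupport ϑ))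

lemma aux_comp_integrable (ϑ : V3 → V3) (hsm : ContDiff ℝ (⊤ : ℕ∞) ϑ) (hcs : HasCompactSupport ϑ)
    (i : Fin 3) : Integrable (fun x : V3 => ϑ x i) := by
  refine Continuous.integrable_of_hasCompactSupport
    ((continuous_apply i).comp hsm.continuous) ?_
  refine aux_hcs_mono ϑ hcs _ fun x hx => ?_
  simp only [Function.mem_support] at hx
  by_contra hmem
  exact hx (congrFun (image_eq_zero_of_notMem_tsupport hmem) i)

lemma aux_mul_div3_integrable (ϑ : V3 → V3) (hsm : ContDiff ℝ (⊤ : ℕ∞) ϑ) (hcs : HasCompactSupport ϑ)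
    (i : Fin 3) (c : ℝ) : Integrable (fun x : V3 => (x i - c) * div3 ϑ x) := by
  refine Continuous.integrable_of_hasCompactSupport
    (((continuous_apply i).sub continuous_const).mul (aux_div3_continuous ϑ hsm)) ?_
  refine aux_hcs_mono ϑ hcs _ fun x hx => ?_
  simp only [Function.mem_support] at hx
  by_contra hmem
  exact hx (by rw [aux_div3_zero_outside ϑ x hmem, mul_zero])

lemma aux_div3_hcs (ϑ : V3 → V3) (hcs : HasCompactSupport ϑ) :
    HasCompactSupport (div3 ϑ) := by
  refine aux_hcs_mono ϑ hcs _ fun x hx => ?_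
  simp only [Function.mem_support] at hx
  by_contra hmem
  exact hx (aux_div3_zero_outside ϑ x hmem)

lemma aux_test_core (Ω : Set V3) (ϑ : V3 → V3) (hϑ : TestField Ω ϑ) (i : Fin 3) (c : ℝ) :
    (∫ x in Ω, ϑ x i) + (∫ x in Ω, (x i - c) * div3 ϑ x) = 0 := by
  obtain ⟨hsm, hcs, hsupp⟩ := hϑ
  obtain ⟨R, hR⟩ := hcs.isBounded.subset_closedBall 0
  have hRbound : ∀ x ∈ tsupport ϑ, ∀ j : Fin 3, |x j| ≤ R := by
    intro x hx j
    have h1 : ‖x‖ ≤ R := by simpa using hR hx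
    exact (norm_le_pi_norm x j).trans h1
  set M : ℝ := |R| + 1 with hM
  have hMb : ∀ x ∈ tsupport ϑ, ∀ j : Fin 3, |x j| < M := fun x hx j =>
    lt_of_le_of_lt ((hRbound x hx j).trans (le_abs_self R)) (by simp [hM])
  set a : V3 := fun _ => -M with ha
  set b : V3 := fun _ => M with hb
  have hle : a ≤ b := fun j => by
    simp only [ha, hb]
    nlinarith [abs_nonneg R]
  have hdiff : ∀ x : V3, HasFDerivAt ϑ (fderiv ℝ ϑ x) x :=
    fun x => (hsm.differentiable (by simp) x).hasFDerivAt
  set f : V3 → V3 := fun x => (x i - c) • ϑ x with hf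
  set f' : V3 → V3 →L[ℝ] V3 := fun x =>
    (x i - c) • fderiv ℝ ϑ x + (ContinuousLinearMap.proj i).smulRight (ϑ x) with hf'
  have hfd : ∀ x : V3, HasFDerivAt f (f' x) x := by
    intro x
    have h1 : HasFDerivAt (fun y : V3 => y i - c)
        (ContinuousLinearMap.proj (R := ℝ) (φ := fun _ : Fin 3 => ℝ) i) x := by
      simpa using ((ContinuousLinearMap.proj (R := ℝ) (φ := fun _ : Fin 3 => ℝ) i).hasFDerivAt
        (x := x)).sub_const c
    exact h1.smul (hdiff x)
  have hdiveq : ∀ x : V3, (∑ j : Fin 3, f' x (Pi.single j 1) j) =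
      (x i - c) * div3 ϑ x + ϑ x i := by
    intro x
    have hterm : ∀ j : Fin 3, f' x (Pi.single j 1) j =
        (x i - c) * (fderiv ℝ ϑ x (Pi.single j 1) j) + ((Pi.single j 1 : V3) i) * ϑ x j := by
      intro j
      simp [hf', ContinuousLinearMap.smulRight_apply, mul_comm]
    rw [Finset.sum_congr rfl fun j _ => hterm j, Finset.sum_add_distrib, ← Finset.mul_sum,
      ← aux_div3_eq ϑ hsm]
    congr 1
    rw [Fin.sum_univ_three]
    fin_cases i <;> simp [Pi.single_apply]
  have hϑ0 : ∀ x : V3, x ∉ tsupport ϑ → ϑ x = 0 := fun x hx =>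
    image_eq_zero_of_notMem_tsupport hx
  have hface : ∀ (j : Fin 3) (t : ℝ), |t| = M → ∀ y : Fin 2 → ℝ,
      f (Fin.insertNth j t y) = 0 := by
    intro j t ht y
    have hy : Fin.insertNth j t y ∉ tsupport ϑ := by
      intro hmem
      have := hMb _ hmem j
      rw [Fin.insertNth_apply_same] at this
      exact absurd ht (ne_of_lt this)
    simp [hf, hϑ0 _ hy]
  have key := MeasureTheory.integral_divergence_of_hasFDerivAt_off_countable
    (a := a) (b := b) hle f f' ∅ Set.countable_empty
    (Continuous.continuousOn (by
      exact ((continuous_apply i).sub continuous_const).smul hsm.continuous))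
    (fun x _ => hfd x)
    (by
      refine (Continuous.continuousOn ?_).integrableOn_compact isCompact_Icc
      have : Continuous fun x : V3 => (x i - c) * div3 ϑ x + ϑ x i :=
        (((continuous_apply i).sub continuous_const).mul (aux_div3_continuous ϑ hsm)).add
          ((continuous_apply i).comp hsm.continuous)
      exact this.congr fun x => (hdiveq x).symm)
  have hM0 : (0:ℝ) < M := by positivity
  have hrhs : ∑ j : Fin 3, ((∫ x in Set.Icc (a ∘ j.succAbove) (b ∘ j.succAbove),
      f (j.insertNth (b j) x) j) - ∫ x in Set.Icc (a ∘ j.succAbove) (b ∘ j.succAbove),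
      f (j.insertNth (a j) x) j) = 0 := by
    refine Finset.sum_eq_zero fun j _ => ?_
    have h1 : ∀ y : Fin 2 → ℝ, f (j.insertNth (b j) y) j = 0 := fun y => by
      rw [hface j (b j) (by simp [hb, abs_of_pos hM0]) y]; rfl
    have h2 : ∀ y : Fin 2 → ℝ, f (j.insertNth (a j) y) j = 0 := fun y => by
      rw [hface j (a j) (by simp [ha, abs_of_pos hM0]) y]; rfl
    simp [h1, h2]
  rw [hrhs] at key
  set F : V3 → ℝ := fun x => (x i - c) * div3 ϑ x + ϑ x i with hF
  have hkey : ∫ x in Set.Icc a b, F x = 0 := by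
    rw [← key]
    exact setIntegral_congr_fun (measurableSet_Icc) fun x _ => (hdiveq x).symm
  have hFz : ∀ x : V3, x ∉ tsupport ϑ → F x = 0 := by
    intro x hx
    simp [hF, aux_div3_zero_outside ϑ x hx, congrFun (hϑ0 x hx) i]
  have hIcc : ∀ x : V3, x ∉ Set.Icc a b → F x = 0 := by
    intro x hx
    refine hFz x fun hmem => hx ⟨fun j => ?_, fun j => ?_⟩
    · simpa [ha] using neg_le_of_abs_le (hMb x hmem j).le
    · simpa [hb] using le_of_abs_le (hMb x hmem j).le
  have hΩz : ∀ x : V3, x ∉ Ω → F x = 0 := fun x hx =>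
    hFz x fun hmem => hx (hsupp hmem)
  have htot : ∫ x in Ω, F x = 0 := by
    rw [setIntegral_eq_integral_of_forall_compl_eq_zero hΩz,
      ← setIntegral_eq_integral_of_forall_compl_eq_zero hIcc, hkey]
  have hsplit : ∫ x in Ω, F x =
      (∫ x in Ω, (x i - c) * div3 ϑ x) + ∫ x in Ω, ϑ x i :=
    integral_add (aux_mul_div3_integrable ϑ hsm hcs i c).integrableOn
      (aux_comp_integrable ϑ hsm hcs i).integrableOn
  rw [hsplit] at htot
  linarith

lemma aux_test_bound (Ω : Set V3) (hΩm : MeasurableSet Ω) (ϑ : V3 → V3)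
    (hϑ : TestField Ω ϑ) (i : Fin 3) (c L : ℝ) (hxc : ∀ x ∈ Ω, |x i - c| ≤ L) :
    |∫ x in Ω, ϑ x i| ≤ (∫ x in Ω, |div3 ϑ x|) * L := by
  have hcore := aux_test_core Ω ϑ hϑ i c
  have heq : ∫ x in Ω, ϑ x i = -∫ x in Ω, (x i - c) * div3 ϑ x := by linarith
  have hint1 : Integrable (fun x : V3 => (x i - c) * div3 ϑ x) :=
    aux_mul_div3_integrable ϑ hϑ.1 hϑ.2.1 i c
  have hint2 : Integrable (div3 ϑ) := by
    refine Continuous.integrable_of_hasCompactSupport (aux_div3_continuous ϑ hϑ.1) ?_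
    exact aux_div3_hcs ϑ hϑ.2.1
  calc |∫ x in Ω, ϑ x i| = |∫ x in Ω, (x i - c) * div3 ϑ x| := by rw [heq, abs_neg]
  _ ≤ ∫ x in Ω, |x i - c| * |div3 ϑ x| := by
      simpa [Real.norm_eq_abs, abs_mul] using
        norm_integral_le_integral_norm (μ := volume.restrict Ω)
          (fun x => (x i - c) * div3 ϑ x)
  _ ≤ ∫ x in Ω, L * |div3 ϑ x| := by
      have hint1' : Integrable (fun x : V3 => |x i - c| * |div3 ϑ x|) := by
        simpa [abs_mul] using hint1.abs
      refine setIntegral_mono_on hint1'.integrableOn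
        (hint2.abs.const_mul L).integrableOn hΩm fun x hx => ?_
      exact mul_le_mul_of_nonneg_right (hxc x hx) (abs_nonneg _)
  _ = (∫ x in Ω, |div3 ϑ x|) * L := by rw [integral_const_mul, mul_comm]

end AuxStmt0


/-- For `φ ∈ D̊(Ω)` with weak divergence `dφ ∈ L²(Ω)`, each component
satisfies `|∫_Ω φ_i| ≤ ‖div φ‖_{L¹(Ω)} · (length of Ω in direction i)`; in particular,
if `div φ = 0` then `∫_Ω φ_i = 0` for all `i`. -/
theorem stmt0 (Ω : Set V3) (hΩo : IsOpen Ω) (hΩc : IsConnected Ω)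
    (hΩb : Bornology.IsBounded Ω)
    (φ : V3 → V3) (dφ : V3 → ℝ) (hφ : MemDc Ω φ dφ)
    (hφ2 : L2 Ω φ) (hdφ2 : L2 Ω dφ) :
    (∀ i : Fin 3,
      |∫ x in Ω, φ x i| ≤
        (∫ x in Ω, |dφ x|) * (sSup ((fun x => x i) '' Ω) - sInf ((fun x => x i) '' Ω))) ∧
    ((∀ x, dφ x = 0) → ∀ i : Fin 3, ∫ x in Ω, φ x i = 0) := by
  
  obtain ⟨θ, hθt, hθφ, hθd⟩ := hφ
  haveI : Fact (volume Ω < ⊤) := ⟨hΩb.measure_lt_top⟩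
  set μ := volume.restrict Ω with hμ
  obtain ⟨r, hr⟩ := hΩb.subset_closedBall 0
  have himg : ∀ i : Fin 3, ((fun x => x i) '' Ω).Nonempty ∧
      BddBelow ((fun x => x i) '' Ω) ∧ BddAbove ((fun x => x i) '' Ω) := by
    intro i
    have hsub : (fun x => x i) '' Ω ⊆ Set.Icc (-r) r := by
      rintro y ⟨x, hx, rfl⟩
      have : ‖x‖ ≤ r := by simpa using hr hx
      exact abs_le.mp ((norm_le_pi_norm x i).trans this)
    exact ⟨hΩc.nonempty.image _, (bddBelow_Icc).mono hsub, (bddAbove_Icc).mono hsub⟩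
  have hmemθ : ∀ (i : Fin 3) (n : ℕ), MemLp (fun x => θ n x i) 2 μ := by
    intro i n
    refine MemLp.restrict Ω ?_
    refine Continuous.memLp_of_hasCompactSupport
      ((continuous_apply i).comp (hθt n).1.continuous) ?_
    exact aux_hcs_mono _ (hθt n).2.1 _ fun x hx => by
      simp only [Function.mem_support] at hx
      by_contra hmem
      exact hx (congrFun (image_eq_zero_of_notMem_tsupport hmem) i)
  have hmemφ : ∀ i : Fin 3, MemLp (fun x => φ x i) 2 μ := by
    intro i
    exact (ContinuousLinearMap.proj (R := ℝ) (φ := fun _ : Fin 3 => ℝ) i).comp_memLp' hφ2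
  have hmemd : ∀ n : ℕ, MemLp (div3 (θ n)) 2 μ := by
    intro n
    refine MemLp.restrict Ω ?_
    exact Continuous.memLp_of_hasCompactSupport
      (aux_div3_continuous _ (hθt n).1) (aux_div3_hcs _ (hθt n).2.1)
  have hB := (aux_int_tendsto μ (fun n => div3 (θ n)) dφ hmemd hdφ2 hθd).2
  have main : ∀ i : Fin 3, |∫ x in Ω, φ x i| ≤
      (∫ x in Ω, |dφ x|) * (sSup ((fun x => x i) '' Ω) - sInf ((fun x => x i) '' Ω)) := by
    intro i
    obtain ⟨hne, hbb, hba⟩ := himg i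
    set c : ℝ := sInf ((fun x => x i) '' Ω) with hc
    set L : ℝ := sSup ((fun x => x i) '' Ω) - c with hL
    have hL0 : 0 ≤ L := sub_nonneg.mpr (csInf_le_csSup hne hbb hba)
    have hxc : ∀ x ∈ Ω, |x i - c| ≤ L := by
      intro x hx
      have h1 : c ≤ x i := csInf_le hbb ⟨x, hx, rfl⟩
      have h2 : x i ≤ sSup ((fun x => x i) '' Ω) := le_csSup hba ⟨x, hx, rfl⟩
      rw [abs_le]
      exact ⟨by linarith, by linarith⟩
    -- L² convergence of the i-th components
    have hsq : Tendsto (fun n => ∫ x in Ω, (θ n x i - φ x i) ^ 2) atTop (𝓝 0) := by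
      refine squeeze_zero (fun n => integral_nonneg fun x => sq_nonneg _)
        (fun n => ?_) hθφ
      refine integral_mono_of_nonneg (Filter.Eventually.of_forall fun x => sq_nonneg _)
        (integrable_finset_sum _ fun j _ => ((hmemθ j n).sub (hmemφ j)).integrable_sq)
        (Filter.Eventually.of_forall fun x => ?_)
      exact Finset.single_le_sum (f := fun j => (θ n x j - φ x j) ^ 2)
        (fun j _ => sq_nonneg _) (Finset.mem_univ i)
    have hA := (aux_int_tendsto μ (fun n x => θ n x i) (fun x => φ x i)
      (fun n => hmemθ i n) (hmemφ i) hsq).1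
    have hbn : ∀ n, |∫ x in Ω, θ n x i| ≤ (∫ x in Ω, |div3 (θ n) x|) * L :=
      fun n => aux_test_bound Ω hΩo.measurableSet (θ n) (hθt n) i c L hxc
    have h1 : Tendsto (fun n => |∫ x in Ω, θ n x i|) atTop (𝓝 |∫ x in Ω, φ x i|) :=
      hA.abs
    have h2 : Tendsto (fun n => (∫ x in Ω, |div3 (θ n) x|) * L) atTop
        (𝓝 ((∫ x in Ω, |dφ x|) * L)) := hB.mul_const L
    exact le_of_tendsto_of_tendsto' h1 h2 hbn
  refine ⟨main, fun h0 i => ?_⟩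
  have hz : (∫ x in Ω, |dφ x|) = 0 := by simp [h0]
  have := main i
  rw [hz, zero_mul] at this
  exact abs_nonpos_iff.mp this
end
end

section
/- Let φ : ℝ³ → ℝ³ be a smooth vector field compactly supported in the rectangular cuboid I = (0,l₁)×(0,l₂)×(0,l₃). Then for any 0 ≤ α₁ < β₁ ≤ l₁, the slab integral satisfies |∫_{I₁} φ₁ dx| ≤ (β₁ − α₁) ‖div φ‖_{L¹(I)}, where I₁ = {x ∈ I : α₁ < x₁ < β₁}. -/
open MeasureTheory Filter Topology

noncomputable section

section AuxLemmas

open Set intervalIntegral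

lemma aux_deriv_zero {f f' : ℝ → ℝ} (hd : ∀ s, HasDerivAt f (f' s) s) {L : ℝ}
    (h0 : ∀ s, s ∉ Set.Ioo 0 L → f s = 0) {s : ℝ} (hs : s < 0 ∨ L < s) : f' s = 0 := by
  have h : HasDerivAt f 0 s := by
    rcases hs with h | h
    · have hev : f =ᶠ[nhds s] fun _ => (0 : ℝ) := by
        filter_upwards [Iio_mem_nhds h] with x hx
        refine h0 x ?_
        simp only [Set.mem_Iio] at hx
        simp only [Set.mem_Ioo, not_and]
        intro h1; linarith
      exact (hasDerivAt_const s (0:ℝ)).congr_of_eventuallyEq hev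
    · have hev : f =ᶠ[nhds s] fun _ => (0 : ℝ) := by
        filter_upwards [Ioi_mem_nhds h] with x hx
        refine h0 x ?_
        simp only [Set.mem_Ioi] at hx
        simp only [Set.mem_Ioo, not_and, not_lt]
        intro _; linarith
      exact (hasDerivAt_const s (0:ℝ)).congr_of_eventuallyEq hev
  exact (hd s).unique h

lemma aux_ftc_Iic {f f' : ℝ → ℝ} (hd : ∀ s, HasDerivAt f (f' s) s) (hc : Continuous f')
    {L : ℝ} (h0 : ∀ s, s ∉ Set.Ioo 0 L → f s = 0) {t : ℝ} (ht : -1 ≤ t) :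
    ∫ s in Set.Iic t, f' s = f t := by
  have hcong : Set.EqOn f' ((Set.Ioc (-1:ℝ) t).indicator f') (Set.Iic t) := by
    intro s hs
    by_cases hm : s ∈ Set.Ioc (-1:ℝ) t
    · rw [Set.indicator_of_mem hm]
    · rw [Set.indicator_of_notMem hm]
      have hs1 : s ≤ -1 := by
        simp only [Set.mem_Ioc, not_and, not_le] at hm
        by_contra hcon
        push_neg at hcon
        exact absurd (Set.mem_Iic.mp hs) (not_le.mpr (hm hcon))
      exact aux_deriv_zero hd h0 (Or.inl (by linarith))
  rw [MeasureTheory.setIntegral_congr_fun measurableSet_Iic hcong,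
    MeasureTheory.setIntegral_indicator measurableSet_Ioc,
    Set.inter_eq_self_of_subset_right Set.Ioc_subset_Iic_self,
    ← intervalIntegral.integral_of_le ht,
    intervalIntegral.integral_eq_sub_of_hasDerivAt (fun x _ => hd x) (hc.intervalIntegrable _ _),
    h0 (-1) (by simp only [Set.mem_Ioo, not_and]; intro h1; linarith), sub_zero]

lemma aux_integral_deriv_zero {f f' : ℝ → ℝ} (hd : ∀ s, HasDerivAt f (f' s) s)
    (hc : Continuous f') {L : ℝ} (hL : 0 < L) (h0 : ∀ s, s ∉ Set.Ioo 0 L → f s = 0) :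
    ∫ s, f' s = 0 := by
  have hcong : f' = (Set.Ioc (-1:ℝ) (L+1)).indicator f' := by
    funext s
    by_cases hm : s ∈ Set.Ioc (-1:ℝ) (L+1)
    · rw [Set.indicator_of_mem hm]
    · rw [Set.indicator_of_notMem hm]
      rcases not_and_or.mp hm with h | h
      · push_neg at h; exact aux_deriv_zero hd h0 (Or.inl (by linarith))
      · push_neg at h; exact aux_deriv_zero hd h0 (Or.inr (by linarith))
  have hI := congrArg (fun g : ℝ → ℝ => ∫ s, g s) hcong
  rw [hI, MeasureTheory.integral_indicator measurableSet_Ioc,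
    ← intervalIntegral.integral_of_le (by linarith : (-1:ℝ) ≤ L + 1),
    intervalIntegral.integral_eq_sub_of_hasDerivAt (fun x _ => hd x) (hc.intervalIntegrable _ _),
    h0 (L+1) (by simp only [Set.mem_Ioo, not_and, not_lt]; intro _; linarith),
    h0 (-1) (by simp only [Set.mem_Ioo, not_and]; intro h1; linarith), sub_zero]

lemma comp_cont (φ : V3 → V3) (hsm : ContDiff ℝ (⊤ : ℕ∞) φ) (i : Fin 3) : Continuous fun x => φ x i :=
  (contDiff_pi.mp hsm i).continuous

lemma tsupport_comp (φ : V3 → V3) (i : Fin 3) : tsupport (fun x => φ x i) ⊆ tsupport φ := by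
  apply closure_mono
  intro x hx
  simp only [Function.mem_support] at hx ⊢
  intro hc
  apply hx
  rw [hc]
  rfl

lemma comp_zero (φ : V3 → V3) {x : V3} (hx : x ∉ tsupport φ) (i : Fin 3) : φ x i = 0 := by
  rw [image_eq_zero_of_notMem_tsupport hx]; rfl

lemma pder_cont (φ : V3 → V3) (hsm : ContDiff ℝ (⊤ : ℕ∞) φ) (i j : Fin 3) : Continuous (pder i j φ) := by
  have h1 : Continuous (fderiv ℝ fun x => φ x i) :=
    (contDiff_pi.mp hsm i).continuous_fderiv (by simp)
  exact h1.clm_apply continuous_const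

lemma pder_zero (φ : V3 → V3) {x : V3} (hx : x ∉ tsupport φ) (i j : Fin 3) :
    pder i j φ x = 0 := by
  have h1 : x ∉ tsupport (fun y => φ y i) := fun h => hx (tsupport_comp φ i h)
  have h2 : fderiv ℝ (fun y => φ y i) x = 0 := by
    by_contra h
    exact h1 (support_fderiv_subset ℝ h)
  simp [pder, h2]

lemma div3_cont (φ : V3 → V3) (hsm : ContDiff ℝ (⊤ : ℕ∞) φ) : Continuous (div3 φ) := by
  unfold div3
  exact ((pder_cont φ hsm 0 0).add (pder_cont φ hsm 1 1)).add (pder_cont φ hsm 2 2)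

lemma div3_zero (φ : V3 → V3) {x : V3} (hx : x ∉ tsupport φ) : div3 φ x = 0 := by
  simp [div3, pder_zero φ hx]

/-- Non-dependent wrapper around `Fin.insertNth` for real tuples. -/
def ins {n : ℕ} (i : Fin (n+1)) (s : ℝ) (y : Fin n → ℝ) : Fin (n+1) → ℝ :=
  Fin.insertNth i s y

lemma ins_same {n : ℕ} (i : Fin (n+1)) (s : ℝ) (y : Fin n → ℝ) : ins i s y i = s :=
  @Fin.insertNth_apply_same n (fun _ => ℝ) i s y

lemma ins_zero_succ {n : ℕ} (s : ℝ) (y : Fin n → ℝ) (m : Fin n) :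
    ins 0 s y m.succ = y m := by
  unfold ins
  rw [Fin.insertNth_zero']
  exact @Fin.cons_succ n (fun _ => ℝ) s y m

lemma single_smul' {n : ℕ} (i : Fin (n+1)) (s : ℝ) :
    (Pi.single i s : Fin (n+1) → ℝ) = s • (Pi.single i 1 : Fin (n+1) → ℝ) := by
  funext k
  simp [Pi.single_apply, mul_ite, mul_one, mul_zero]

lemma ins_rep {n : ℕ} (i : Fin (n+1)) (s : ℝ) (y : Fin n → ℝ) :
    ins i s y = ins i 0 y + s • (Pi.single i 1 : Fin (n+1) → ℝ) := by
  have h1 : ins i s y = ins i 0 y + ins i s 0 := by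
    unfold ins
    rw [← Fin.insertNth_add]
    norm_num
  rw [h1]
  congr 1
  unfold ins
  rw [Fin.insertNth_zero_right]
  exact single_smul' i s

lemma ins_zero_smul {n : ℕ} (i : Fin (n+1)) (u : ℝ) (σ : Fin n → ℝ) :
    ins i 0 (u • σ) = u • ins i 0 σ := by
  funext k
  refine Fin.succAboveCases i ?_ ?_ k
  · simp [ins, Fin.insertNth_apply_same]
  · intro m
    simp [ins, Fin.insertNth_apply_succAbove]

lemma single_succ {n : ℕ} (j : Fin (n+1)) :
    (Pi.single j.succ 1 : Fin (n+2) → ℝ) = ins 0 0 (Pi.single j 1) := by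
  funext k
  refine Fin.cases ?_ (fun m => ?_) k
  · rw [show ins (0 : Fin (n+2)) 0 (Pi.single j 1) 0 = 0 from ins_same 0 0 _,
      Pi.single_eq_of_ne (Fin.succ_ne_zero j).symm]
  · rw [ins_zero_succ]
    simp [Pi.single_apply, Fin.succ_inj]

lemma aux_line (φ : V3 → V3) (hsm : ContDiff ℝ (⊤ : ℕ∞) φ) (i j : Fin 3) (a : V3) (s : ℝ) :
    HasDerivAt (fun u : ℝ => φ (a + u • (Pi.single j 1 : V3)) i)
      (pder i j φ (a + s • (Pi.single j 1 : V3))) s := by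
  have hgi : ContDiff ℝ (⊤ : ℕ∞) (fun x => φ x i) := contDiff_pi.mp hsm i
  have hline : HasDerivAt (fun u : ℝ => a + u • (Pi.single j 1 : V3)) (Pi.single j 1) s := by
    simpa using ((hasDerivAt_id s).smul_const (Pi.single j 1 : V3)).const_add a
  exact ((hgi.differentiable (by simp) (a + s • (Pi.single j 1 : V3))).hasFDerivAt).comp_hasDerivAt
    s hline

lemma slice_int (l : Fin 3 → ℝ) (F : V3 → ℝ) (hFc : Continuous F)
    (hF0 : ∀ x, x ∉ cuboid l → F x = 0) (s : ℝ) :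
    MeasureTheory.Integrable (fun y : Fin 2 → ℝ => F (ins 0 s y)) := by
  have hc : Continuous fun y : Fin 2 → ℝ => F (ins 0 s y) :=
    hFc.comp (continuous_const.finInsertNth 0 continuous_id)
  have hscs : HasCompactSupport fun y : Fin 2 → ℝ => F (ins 0 s y) := by
    apply HasCompactSupport.intro (isCompact_univ_pi fun m : Fin 2 => isCompact_Icc
      (a := (0:ℝ)) (b := l m.succ))
    intro y hy
    apply hF0
    intro hmem
    apply hy
    intro m _
    have h1 := hmem m.succ (Set.mem_univ _)
    rw [show ins (0 : Fin 3) s y m.succ = y m from ins_zero_succ s y m] at h1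
    exact ⟨le_of_lt h1.1, le_of_lt h1.2⟩
  exact hc.integrable_of_hasCompactSupport hscs

end AuxLemmas

lemma abs_int_le {X : Type*} [MeasurableSpace X] (μ : MeasureTheory.Measure X) (f : X → ℝ) :
    |∫ x, f x ∂μ| ≤ ∫ x, |f x| ∂μ := by
  simpa [Real.norm_eq_abs] using MeasureTheory.norm_integral_le_integral_norm (μ := μ) f
section SliceLemma
open Set MeasureTheory

lemma slice_pder_zero (l : Fin 3 → ℝ) (hl : ∀ i, 0 < l i) (φ : V3 → V3)
    (hsm : ContDiff ℝ (⊤ : ℕ∞) φ) (hsupp : tsupport φ ⊆ cuboid l) (s : ℝ) (j : Fin 2) :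
    ∫ y : Fin 2 → ℝ, pder j.succ j.succ φ (ins 0 s y) = 0 := by
  have hp0 : ∀ x, x ∉ cuboid l → pder j.succ j.succ φ x = 0 := fun x hx =>
    pder_zero φ (fun h => hx (hsupp h)) _ _
  have hFc := pder_cont φ hsm j.succ j.succ
  have hint : MeasureTheory.Integrable (fun y : Fin 2 → ℝ => pder j.succ j.succ φ (ins 0 s y)) :=
    slice_int l _ hFc hp0 s
  set e2 := MeasurableEquiv.piFinSuccAbove (fun _ : Fin 2 => ℝ) j with he2
  have hpm2 : MeasurePreserving e2 := volume_preserving_piFinSuccAbove (fun _ : Fin 2 => ℝ) j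
  have hsymm2 : ∀ p : ℝ × (Fin 1 → ℝ), e2.symm p = ins j p.1 p.2 := by
    intro p
    simp [he2, MeasurableEquiv.piFinSuccAbove_symm_apply, Fin.insertNthEquiv, ins]
  have h1 : ∫ y : Fin 2 → ℝ, pder j.succ j.succ φ (ins 0 s y)
      = ∫ p : ℝ × (Fin 1 → ℝ), pder j.succ j.succ φ (ins 0 s (ins j p.1 p.2)) := by
    rw [← (hpm2.symm _).integral_comp e2.symm.measurableEmbedding
      (fun y => pder j.succ j.succ φ (ins 0 s y))]
    simp only [hsymm2]
  rw [h1]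
  have hint2 : MeasureTheory.Integrable
      (fun p : ℝ × (Fin 1 → ℝ) => pder j.succ j.succ φ (ins 0 s (ins j p.1 p.2))) := by
    have := ((hpm2.symm _).integrable_comp_emb e2.symm.measurableEmbedding).mpr hint
    simpa [Function.comp_def, hsymm2] using this
  rw [MeasureTheory.Measure.volume_eq_prod, MeasureTheory.integral_prod_symm _ hint2]
  have hinner : ∀ w : Fin 1 → ℝ, ∫ u : ℝ, pder j.succ j.succ φ (ins 0 s (ins j u w)) = 0 := by
    intro w
    obtain ⟨a, hX⟩ : ∃ a : V3, ∀ u : ℝ,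
        ins 0 s (ins j u w) = a + u • (Pi.single j.succ 1 : V3) := by
      refine ⟨ins 0 s (ins j 0 w), fun u => ?_⟩
      rw [ins_rep j u w]
      have h2 : ins 0 s (ins j 0 w + u • (Pi.single j 1 : Fin 2 → ℝ))
          = ins 0 s (ins j 0 w) + ins 0 0 (u • (Pi.single j 1 : Fin 2 → ℝ)) := by
        unfold ins
        rw [← Fin.insertNth_add]
        norm_num
      rw [h2, ins_zero_smul, ← single_succ]
    have hd' : ∀ u : ℝ, HasDerivAt (fun v => φ (ins 0 s (ins j v w)) j.succ)
        (pder j.succ j.succ φ (ins 0 s (ins j u w))) u := by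
      intro u
      simp only [hX]
      exact aux_line φ hsm j.succ j.succ _ u
    have hcont : Continuous fun u => pder j.succ j.succ φ (ins 0 s (ins j u w)) := by
      simp only [hX]
      exact (pder_cont φ hsm _ _).comp
        (continuous_const.add (continuous_id.smul continuous_const))
    have h0' : ∀ u, u ∉ Set.Ioo 0 (l j.succ) → φ (ins 0 s (ins j u w)) j.succ = 0 := by
      intro u hu
      by_contra hne
      apply hu
      have hxc : ins 0 s (ins j u w) ∈ cuboid l := by
        by_contra hxc
        exact hne (comp_zero φ (fun h => hxc (hsupp h)) j.succ)
      simp only [cuboid, Set.mem_univ_pi] at hxc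
      have h2 := hxc j.succ
      rw [ins_zero_succ, show ins j u w j = u from ins_same j u w] at h2
      exact h2
    exact aux_integral_deriv_zero hd' hcont (hl j.succ) h0'
  simp only [hinner, MeasureTheory.integral_zero]

end SliceLemma
/-- For a smooth vector field compactly supported in the cuboid
`I = (0,l₁)×(0,l₂)×(0,l₃)` and `0 ≤ α₁ < β₁ ≤ l₁`, the slab integral satisfies
`|∫_{I₁} φ₁| ≤ (β₁ − α₁) ‖div φ‖_{L¹(I)}`. -/
theorem stmt3 (l : Fin 3 → ℝ) (hl : ∀ i, 0 < l i)
    (φ : V3 → V3) (hsm : ContDiff ℝ (⊤ : ℕ∞) φ) (hcs : HasCompactSupport φ)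
    (hsupp : tsupport φ ⊆ cuboid l)
    (α β : ℝ) (hα : 0 ≤ α) (hαβ : α < β) (hβ : β ≤ l 0) :
    |∫ x in slab (cuboid l) 0 α β, φ x 0| ≤ (β - α) * ∫ x in cuboid l, |div3 φ x| := by
  classical
  have hΩm : MeasurableSet (cuboid l) := MeasurableSet.univ_pi fun i => measurableSet_Ioo
  have hφ0 : ∀ x, x ∉ cuboid l → ∀ i, φ x i = 0 := fun x hx i =>
    comp_zero φ (fun h => hx (hsupp h)) i
  have hd0 : ∀ x, x ∉ cuboid l → div3 φ x = 0 := fun x hx =>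
    div3_zero φ (fun h => hx (hsupp h))
  have hdc : Continuous (div3 φ) := div3_cont φ hsm
  have hdcs : HasCompactSupport (div3 φ) :=
    HasCompactSupport.intro hcs fun x hx => div3_zero φ hx
  have hdint : Integrable (div3 φ) := hdc.integrable_of_hasCompactSupport hdcs
  have hgc : Continuous fun x => φ x 0 := comp_cont φ hsm 0
  have hgcs : HasCompactSupport fun x => φ x 0 :=
    HasCompactSupport.intro hcs fun x hx => comp_zero φ hx 0
  have hgint : Integrable fun x => φ x 0 := hgc.integrable_of_hasCompactSupport hgcs
  set e := MeasurableEquiv.piFinSuccAbove (fun _ : Fin 3 => ℝ) 0 with he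
  have hpm : MeasurePreserving e := volume_preserving_piFinSuccAbove (fun _ : Fin 3 => ℝ) 0
  have hsymm : ∀ p : ℝ × (Fin 2 → ℝ), e.symm p = ins 0 p.1 p.2 := by
    intro p
    simp [he, MeasurableEquiv.piFinSuccAbove_symm_apply, Fin.insertNthEquiv, Fin.consEquiv,
      Fin.insertNth_zero, ins]
  have hcompInt : ∀ F : V3 → ℝ, Integrable F →
      Integrable fun p : ℝ × (Fin 2 → ℝ) => F (ins 0 p.1 p.2) := by
    intro F hF
    have := ((hpm.symm _).integrable_comp_emb e.symm.measurableEmbedding).mpr hF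
    simpa [Function.comp_def, hsymm] using this
  -- Step A : reduce slab integral to an iterated integral
  have hslab : slab (cuboid l) 0 α β = (fun x : V3 => x 0) ⁻¹' Set.Ioo α β ∩ cuboid l := by
    ext x
    simp only [slab, Set.mem_setOf_eq, Set.mem_inter_iff, Set.mem_preimage, Set.mem_Ioo]
    tauto
  have hindg : (cuboid l).indicator (fun x => φ x 0) = fun x => φ x 0 := by
    funext x
    by_cases hx : x ∈ cuboid l
    · rw [Set.indicator_of_mem hx]
    · rw [Set.indicator_of_notMem hx, hφ0 x hx 0]
  have hA : ∫ x in slab (cuboid l) 0 α β, φ x 0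
      = ∫ x in (fun x : V3 => x 0) ⁻¹' Set.Ioo α β, φ x 0 := by
    rw [hslab, ← setIntegral_indicator hΩm, hindg]
  have hpre : e.symm ⁻¹' ((fun x : V3 => x 0) ⁻¹' Set.Ioo α β)
      = Set.Ioo α β ×ˢ (Set.univ : Set (Fin 2 → ℝ)) := by
    ext p
    simp only [Set.mem_preimage, hsymm, Set.mem_prod, Set.mem_univ, and_true]
    rw [show ins 0 p.1 p.2 0 = p.1 from ins_same 0 p.1 p.2]
  have hB : ∫ x in (fun x : V3 => x 0) ⁻¹' Set.Ioo α β, φ x 0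
      = ∫ p in Set.Ioo α β ×ˢ (Set.univ : Set (Fin 2 → ℝ)), φ (ins 0 p.1 p.2) 0 := by
    rw [← (hpm.symm _).setIntegral_preimage_emb e.symm.measurableEmbedding
      (fun x => φ x 0) ((fun x : V3 => x 0) ⁻¹' Set.Ioo α β), hpre]
    exact setIntegral_congr_fun (measurableSet_Ioo.prod MeasurableSet.univ)
      fun p _ => by rw [hsymm]
  have hprodInt : Integrable fun p : ℝ × (Fin 2 → ℝ) => φ (ins 0 p.1 p.2) 0 :=
    hcompInt _ hgint
  have hC : ∫ p in Set.Ioo α β ×ˢ (Set.univ : Set (Fin 2 → ℝ)), φ (ins 0 p.1 p.2) 0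
      = ∫ t in Set.Ioo α β, ∫ y, φ (ins 0 t y) 0 := by
    rw [Measure.volume_eq_prod, setIntegral_prod _ hprodInt.integrableOn]
    simp [Measure.restrict_univ]
  -- Step B : the slice bound
  have hGb : ∀ t ∈ Set.Ioo α β, |∫ y, φ (ins 0 t y) 0| ≤ ∫ x, |div3 φ x| := by
    intro t ht
    have ht0 : (0:ℝ) < t := lt_of_le_of_lt hα ht.1
    -- pointwise fundamental theorem of calculus in the first variable
    have hB1 : ∀ y : Fin 2 → ℝ,
        φ (ins 0 t y) 0 = ∫ s in Set.Iic t, pder 0 0 φ (ins 0 s y) := by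
      intro y
      obtain ⟨a, hrep⟩ : ∃ a : V3, ∀ s : ℝ, ins 0 s y = a + s • (Pi.single 0 1 : V3) :=
        ⟨ins 0 0 y, fun s => ins_rep 0 s y⟩
      have hd' : ∀ s : ℝ, HasDerivAt (fun u => φ (ins 0 u y) 0)
          (pder 0 0 φ (ins 0 s y)) s := by
        intro s
        simp only [hrep]
        exact aux_line φ hsm 0 0 a s
      have hcont : Continuous fun s => pder 0 0 φ (ins 0 s y) := by
        simp only [hrep]
        exact (pder_cont φ hsm 0 0).comp
          (continuous_const.add (continuous_id.smul continuous_const))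
      have h0' : ∀ s, s ∉ Set.Ioo 0 (l 0) → φ (ins 0 s y) 0 = 0 := by
        intro s hs
        by_contra hne
        apply hs
        have hxc : ins 0 s y ∈ cuboid l := by
          by_contra hxc
          exact hne (hφ0 _ hxc 0)
        simp only [cuboid, Set.mem_univ_pi] at hxc
        have h2 := hxc 0
        rw [show ins (0:Fin 3) s y 0 = s from ins_same 0 s y] at h2
        exact h2
      exact (aux_ftc_Iic hd' hcont h0' (by linarith : (-1:ℝ) ≤ t)).symm
    -- integrability of slices
    have hp00c := pder_cont φ hsm 0 0
    have hp00cs : HasCompactSupport (pder 0 0 φ) :=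
      HasCompactSupport.intro hcs fun x hx => pder_zero φ hx 0 0
    have hPint : Integrable fun z : ℝ × (Fin 2 → ℝ) => pder 0 0 φ (ins 0 z.1 z.2) :=
      hcompInt _ (hp00c.integrable_of_hasCompactSupport hp00cs)
    -- the indicator trick for Fubini
    set Q : ℝ × (Fin 2 → ℝ) → ℝ :=
      fun z => (Set.Iic t ×ˢ (Set.univ : Set (Fin 2 → ℝ))).indicator
        (fun z => pder 0 0 φ (ins 0 z.1 z.2)) z with hQdef
    have hQint : Integrable Q :=
      hPint.indicator (measurableSet_Iic.prod MeasurableSet.univ)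
    have hQ1 : ∀ y : Fin 2 → ℝ, (∫ u, Q (u, y)) = φ (ins 0 t y) 0 := by
      intro y
      have hfe : (fun u => Q (u, y))
          = (Set.Iic t).indicator fun u => pder 0 0 φ (ins 0 u y) := by
        funext u
        simp only [hQdef]
        by_cases hu : u ∈ Set.Iic t
        · rw [Set.indicator_of_mem hu,
            Set.indicator_of_mem (Set.mem_prod.mpr ⟨hu, Set.mem_univ _⟩)]
        · rw [Set.indicator_of_notMem hu,
            Set.indicator_of_notMem (fun hc => hu (Set.mem_prod.mp hc).1)]
      rw [hfe, integral_indicator measurableSet_Iic]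
      exact (hB1 y).symm
    have hQ2 : ∀ u : ℝ, (∫ y, Q (u, y))
        = (Set.Iic t).indicator (fun u => ∫ y, pder 0 0 φ (ins 0 u y)) u := by
      intro u
      by_cases hu : u ∈ Set.Iic t
      · rw [Set.indicator_of_mem hu]
        have hfe : (fun y : Fin 2 → ℝ => Q (u, y))
            = fun y => pder 0 0 φ (ins 0 u y) := by
          funext y
          simp only [hQdef]
          rw [Set.indicator_of_mem (Set.mem_prod.mpr ⟨hu, Set.mem_univ _⟩)]
        rw [hfe]
      · rw [Set.indicator_of_notMem hu]
        have hfe : (fun y : Fin 2 → ℝ => Q (u, y)) = fun _ => (0:ℝ) := by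
          funext y
          simp only [hQdef]
          rw [Set.indicator_of_notMem (fun hc => hu (Set.mem_prod.mp hc).1)]
        rw [hfe, integral_zero]
    have e2' : ∫ z, Q z = ∫ y, ∫ u, Q (u, y) := by
      rw [Measure.volume_eq_prod]
      exact integral_prod_symm _ hQint
    have e3' : ∫ z, Q z = ∫ u, ∫ y, Q (u, y) := by
      rw [Measure.volume_eq_prod]
      exact integral_prod _ hQint
    have hGt : (∫ y, φ (ins 0 t y) 0)
        = ∫ u in Set.Iic t, ∫ y, pder 0 0 φ (ins 0 u y) := by
      have e1' : ∫ y, ∫ u, Q (u, y) = ∫ y, φ (ins 0 t y) 0 := by simp only [hQ1]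
      have e4' : ∫ u, ∫ y, Q (u, y)
          = ∫ u, (Set.Iic t).indicator (fun u => ∫ y, pder 0 0 φ (ins 0 u y)) u := by
        simp only [hQ2]
      rw [← e1', ← e2', e3', e4', integral_indicator measurableSet_Iic]
    -- replace the slice of `∂₁φ₁` by the slice of the divergence
    have hq1' : ∀ s : ℝ, ∫ y : Fin 2 → ℝ, pder 1 1 φ (ins 0 s y) = 0 := by
      intro s
      have h := slice_pder_zero l hl φ hsm hsupp s 0
      rwa [show (0 : Fin 2).succ = (1 : Fin 3) from rfl] at h
    have hq2' : ∀ s : ℝ, ∫ y : Fin 2 → ℝ, pder 2 2 φ (ins 0 s y) = 0 := by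
      intro s
      have h := slice_pder_zero l hl φ hsm hsupp s 1
      rwa [show (1 : Fin 2).succ = (2 : Fin 3) from rfl] at h
    have hPd : ∀ u : ℝ, (∫ y, pder 0 0 φ (ins 0 u y)) = ∫ y, div3 φ (ins 0 u y) := by
      intro u
      have i0 := slice_int l _ (pder_cont φ hsm 0 0)
        (fun x hx => pder_zero φ (fun h => hx (hsupp h)) 0 0) u
      have i1 := slice_int l _ (pder_cont φ hsm 1 1)
        (fun x hx => pder_zero φ (fun h => hx (hsupp h)) 1 1) u
      have i2 := slice_int l _ (pder_cont φ hsm 2 2)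
        (fun x hx => pder_zero φ (fun h => hx (hsupp h)) 2 2) u
      have hsum : ∫ y, div3 φ (ins 0 u y)
          = ∫ y, (pder 0 0 φ (ins 0 u y) + pder 1 1 φ (ins 0 u y))
            + pder 2 2 φ (ins 0 u y) := rfl
      have hadd1 : ∫ y, (pder 0 0 φ (ins 0 u y) + pder 1 1 φ (ins 0 u y))
          = (∫ y, pder 0 0 φ (ins 0 u y)) + ∫ y, pder 1 1 φ (ins 0 u y) :=
        integral_add i0 i1
      have hadd2 : ∫ y, ((pder 0 0 φ (ins 0 u y) + pder 1 1 φ (ins 0 u y))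
            + pder 2 2 φ (ins 0 u y))
          = (∫ y, (pder 0 0 φ (ins 0 u y) + pder 1 1 φ (ins 0 u y)))
            + ∫ y, pder 2 2 φ (ins 0 u y) :=
        integral_add (i0.add i1) i2
      rw [hsum, hadd2, hadd1, hq1' u, hq2' u, add_zero, add_zero]
    have hGt2 : (∫ y, φ (ins 0 t y) 0) = ∫ u in Set.Iic t, ∫ y, div3 φ (ins 0 u y) := by
      rw [hGt]
      exact setIntegral_congr_fun measurableSet_Iic fun u _ => hPd u
    -- integrability for the final estimates
    have hDint : Integrable fun z : ℝ × (Fin 2 → ℝ) => div3 φ (ins 0 z.1 z.2) :=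
      hcompInt _ hdint
    have hDabs : Integrable fun z : ℝ × (Fin 2 → ℝ) => |div3 φ (ins 0 z.1 z.2)| := hDint.abs
    have hhint : Integrable fun u : ℝ => ∫ y, div3 φ (ins 0 u y) := by
      have := hDint.integral_prod_left
      simpa using this
    have hHint : Integrable fun u : ℝ => ∫ y, |div3 φ (ins 0 u y)| := by
      have := hDabs.integral_prod_left
      simpa using this
    have hb1 : |∫ u in Set.Iic t, ∫ y, div3 φ (ins 0 u y)|
        ≤ ∫ u in Set.Iic t, |∫ y, div3 φ (ins 0 u y)| := by
      exact abs_int_le (volume.restrict (Set.Iic t)) fun u => ∫ y, div3 φ (ins 0 u y)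
    have hb2 : (∫ u in Set.Iic t, |∫ y, div3 φ (ins 0 u y)|)
        ≤ ∫ u in Set.Iic t, ∫ y, |div3 φ (ins 0 u y)| := by
      refine setIntegral_mono_on hhint.abs.integrableOn hHint.integrableOn
        measurableSet_Iic ?_
      intro u _
      exact abs_int_le volume fun y => div3 φ (ins 0 u y)
    have hb3 : (∫ u in Set.Iic t, ∫ y, |div3 φ (ins 0 u y)|)
        ≤ ∫ u, ∫ y, |div3 φ (ins 0 u y)| :=
      setIntegral_le_integral hHint
        (Filter.Eventually.of_forall fun u => integral_nonneg fun y => abs_nonneg _)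
    have hb4 : (∫ u, ∫ y, |div3 φ (ins 0 u y)|) = ∫ x, |div3 φ x| := by
      have h5 : (∫ u, ∫ y, |div3 φ (ins 0 u y)|)
          = ∫ z : ℝ × (Fin 2 → ℝ), |div3 φ (ins 0 z.1 z.2)| := by
        rw [Measure.volume_eq_prod]
        exact (integral_prod _ hDabs).symm
      rw [h5, show (fun z : ℝ × (Fin 2 → ℝ) => |div3 φ (ins 0 z.1 z.2)|)
          = fun z => |div3 φ (e.symm z)| from funext fun z => by rw [hsymm]]
      exact (hpm.symm _).integral_comp e.symm.measurableEmbedding fun x => |div3 φ x|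
    rw [hGt2]
    calc |∫ u in Set.Iic t, ∫ y, div3 φ (ins 0 u y)|
        ≤ ∫ u in Set.Iic t, |∫ y, div3 φ (ins 0 u y)| := hb1
      _ ≤ ∫ u in Set.Iic t, ∫ y, |div3 φ (ins 0 u y)| := hb2
      _ ≤ ∫ u, ∫ y, |div3 φ (ins 0 u y)| := hb3
      _ = ∫ x, |div3 φ x| := hb4
  -- Step C : conclude
  have hM : ∫ x in cuboid l, |div3 φ x| = ∫ x, |div3 φ x| :=
    setIntegral_eq_integral_of_forall_compl_eq_zero fun x hx => by rw [hd0 x hx, abs_zero]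
  rw [hA, hB, hC, hM]
  have hfin : volume (Set.Ioo α β) < ⊤ := by
    rw [Real.volume_Ioo]; exact ENNReal.ofReal_lt_top
  have hvol : (volume (Set.Ioo α β)).toReal = β - α := by
    rw [Real.volume_Ioo, ENNReal.toReal_ofReal (by linarith)]
  have hmain := norm_setIntegral_le_of_norm_le_const (C := ∫ x, |div3 φ x|) hfin
    (fun t ht => by rw [Real.norm_eq_abs]; exact hGb t ht)
  rw [Real.norm_eq_abs, measureReal_def, hvol] at hmain
  calc |∫ t in Set.Ioo α β, ∫ y, φ (ins 0 t y) 0|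
      ≤ (∫ x, |div3 φ x|) * (β - α) := hmain
    _ = (β - α) * ∫ x, |div3 φ x| := mul_comm _ _
end
end

section
/- Let φ : ℝ³ → ℝ³ be smooth and compactly supported in I = (0,l₁)×(0,l₂)×(0,l₃). For any 0 ≤ α₂ < β₂ ≤ l₂ and 0 ≤ α₃ < β₃ ≤ l₃, setting I₂₃ = {x ∈ I : α₂ < x₂ < β₂, α₃ < x₃ < β₃} and I₃ = {x ∈ I : α₃ < x₃ < β₃}, one has |∫_{I₂₃} φ₁ dx| ≤ (β₂ − α₂) ‖(rot φ)₃‖_{L¹(I₃)}, where (rot φ)₃ = ∂₁φ₂ − ∂₂φ₁. -/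
open MeasureTheory Filter Topology

noncomputable section

namespace Stmt6Aux

variable {l : Fin 3 → ℝ} {φ : V3 → V3}

lemma mem_cuboid {x : V3} : x ∈ cuboid l ↔ ∀ i, 0 < x i ∧ x i < l i := by
  simp [cuboid, Set.mem_pi, Set.mem_Ioo]

lemma comp_contDiff (hsm : ContDiff ℝ (⊤ : ℕ∞) φ) (i : Fin 3) :
    ContDiff ℝ (⊤ : ℕ∞) (fun y => φ y i) :=
  (ContinuousLinearMap.proj i (R := ℝ) (φ := fun _ : Fin 3 => ℝ)).contDiff.comp hsm

lemma comp_zero_off (hsupp : tsupport φ ⊆ cuboid l) {x : V3} (hx : x ∉ cuboid l) (i : Fin 3) :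
    φ x i = 0 := by
  have : φ x = 0 := image_eq_zero_of_notMem_tsupport (fun h => hx (hsupp h))
  simp [this]

lemma pder_cont (hsm : ContDiff ℝ (⊤ : ℕ∞) φ) (i j : Fin 3) : Continuous (pder i j φ) := by
  have h : Continuous (fderiv ℝ (fun y => φ y i)) :=
    ((comp_contDiff hsm i).fderiv_right (m := (⊤ : ℕ∞)) le_rfl).continuous
  exact h.clm_apply continuous_const

lemma pder_zero_off (hsupp : tsupport φ ⊆ cuboid l) {x : V3} (hx : x ∉ cuboid l) (i j : Fin 3) :
    pder i j φ x = 0 := by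
  have hx' : x ∉ tsupport (fun y => φ y i) := by
    intro h
    have : tsupport (fun y => φ y i) ⊆ tsupport φ := by
      apply closure_mono
      intro y hy hy'
      exact hy (by simp [hy'])
    exact hx (hsupp (this h))
  have : fderiv ℝ (fun y => φ y i) x = 0 := by
    by_contra h
    exact hx' (support_fderiv_subset ℝ (Function.mem_support.2 h))
  simp [pder, this]

lemma rot_zero_off (hsupp : tsupport φ ⊆ cuboid l) {x : V3} (hx : x ∉ cuboid l) (i : Fin 3) :
    rot3 φ x i = 0 := by
  fin_cases i <;> simp [rot3, pder_zero_off hsupp hx]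

lemma not_mem_cuboid_of_fst {a b c : ℝ} (ha : a ∉ Set.Ioo 0 (l 0)) : ![a,b,c] ∉ cuboid l :=
  fun h => ha (by simpa [Set.mem_Ioo] using mem_cuboid.1 h 0)

lemma not_mem_cuboid_of_snd {a b c : ℝ} (hb : b ∉ Set.Ioo 0 (l 1)) : ![a,b,c] ∉ cuboid l :=
  fun h => hb (by simpa [Set.mem_Ioo] using mem_cuboid.1 h 1)

lemma not_mem_cuboid_of_trd {a b c : ℝ} (hc : c ∉ Set.Ioo 0 (l 2)) : ![a,b,c] ∉ cuboid l :=
  fun h => hc (by simpa [Set.mem_Ioo] using mem_cuboid.1 h 2)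

lemma cont_mk3 : Continuous (fun p : ℝ × ℝ × ℝ => (![p.2.1, p.2.2, p.1] : V3)) := by
  apply continuous_pi
  intro i
  fin_cases i <;> simp <;> fun_prop

lemma cont_mk2 (c : ℝ) : Continuous (fun q : ℝ × ℝ => (![q.1, q.2, c] : V3)) := by
  apply continuous_pi
  intro i
  fin_cases i <;> simp <;> fun_prop


-- curve derivative lemmas
lemma line_b (a c : ℝ) (t : ℝ) :
    HasDerivAt (fun b : ℝ => (![a, b, c] : V3)) (Pi.single 1 1) t := by
  have h : (fun b : ℝ => (![a, b, c] : V3)) =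
      fun b : ℝ => (![a, (0:ℝ), c] : V3) + b • (Pi.single 1 1 : V3) := by
    funext b
    funext i
    fin_cases i <;> simp [Pi.single_apply]
  rw [h]
  simpa using (((hasDerivAt_id t).smul_const (Pi.single 1 1 : V3)).const_add (![a, (0:ℝ), c] : V3))

lemma line_a (b c : ℝ) (t : ℝ) :
    HasDerivAt (fun a : ℝ => (![a, b, c] : V3)) (Pi.single 0 1) t := by
  have h : (fun a : ℝ => (![a, b, c] : V3)) =
      fun a : ℝ => (![(0:ℝ), b, c] : V3) + a • (Pi.single 0 1 : V3) := by
    funext a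
    funext i
    fin_cases i <;> simp [Pi.single_apply]
  rw [h]
  simpa using (((hasDerivAt_id t).smul_const (Pi.single 0 1 : V3)).const_add (![(0:ℝ), b, c] : V3))

lemma hderiv_b (hsm : ContDiff ℝ (⊤ : ℕ∞) φ) (a c t : ℝ) :
    HasDerivAt (fun b => φ ![a, b, c] 0) (pder 0 1 φ ![a, t, c]) t := by
  have hψ : Differentiable ℝ (fun y => φ y 0) := (comp_contDiff hsm 0).differentiable (by simp)
  exact (hψ _).hasFDerivAt.comp_hasDerivAt t (line_b a c t)

lemma hderiv_a (hsm : ContDiff ℝ (⊤ : ℕ∞) φ) (b c t : ℝ) :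
    HasDerivAt (fun a => φ ![a, b, c] 1) (pder 1 0 φ ![t, b, c]) t := by
  have hψ : Differentiable ℝ (fun y => φ y 1) := (comp_contDiff hsm 1).differentiable (by simp)
  exact (hψ _).hasFDerivAt.comp_hasDerivAt t (line_a b c t)

lemma cont_line_b (a c : ℝ) : Continuous (fun t : ℝ => (![a, t, c] : V3)) := by
  apply continuous_pi; intro i; fin_cases i <;> simp <;> fun_prop

lemma cont_line_a (b c : ℝ) : Continuous (fun t : ℝ => (![t, b, c] : V3)) := by
  apply continuous_pi; intro i; fin_cases i <;> simp <;> fun_prop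

lemma ftc_b (hsm : ContDiff ℝ (⊤ : ℕ∞) φ) (hsupp : tsupport φ ⊆ cuboid l) (a c b : ℝ) :
    φ ![a, b, c] 0 = ∫ t in (-1 : ℝ)..b, pder 0 1 φ ![a, t, c] := by
  have hInt : IntervalIntegrable (fun t => pder 0 1 φ ![a, t, c]) volume (-1) b :=
    ((pder_cont hsm 0 1).comp (cont_line_b a c)).intervalIntegrable _ _
  have h := intervalIntegral.integral_eq_sub_of_hasDerivAt
    (f := fun b => φ ![a, b, c] 0) (f' := fun t => pder 0 1 φ ![a, t, c])
    (fun t _ => hderiv_b hsm a c t) hInt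
  have h2 : φ ![a, (-1:ℝ), c] 0 = 0 :=
    comp_zero_off hsupp (not_mem_cuboid_of_snd (by norm_num [Set.mem_Ioo])) 0
  rw [h]; simp [h2]

lemma int_a_pder10 (hl : ∀ i, 0 < l i) (hsm : ContDiff ℝ (⊤ : ℕ∞) φ)
    (hsupp : tsupport φ ⊆ cuboid l) (b c : ℝ) :
    ∫ a : ℝ, pder 1 0 φ ![a, b, c] = 0 := by
  have h0 : ∀ a : ℝ, a ∉ Set.Ioc (-1 : ℝ) (l 0 + 1) → pder 1 0 φ ![a, b, c] = 0 := by
    intro a ha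
    refine pder_zero_off hsupp (not_mem_cuboid_of_fst ?_) 1 0
    simp only [Set.mem_Ioc, not_and_or, not_lt, not_le] at ha
    have := hl 0
    simp only [Set.mem_Ioo, not_and_or, not_lt]
    rcases ha with h | h
    · left; linarith
    · right; linarith
  rw [← setIntegral_eq_integral_of_forall_compl_eq_zero h0]
  rw [← intervalIntegral.integral_of_le (by have := hl 0; linarith)]
  have h := intervalIntegral.integral_eq_sub_of_hasDerivAt (a := (-1:ℝ)) (b := l 0 + 1)
    (f := fun a => φ ![a, b, c] 1) (f' := fun t => pder 1 0 φ ![t, b, c])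
    (fun t _ => hderiv_a hsm b c t) (((pder_cont hsm 1 0).comp (cont_line_a b c)).intervalIntegrable _ _)
  have h1 : φ ![(-1:ℝ), b, c] 1 = 0 :=
    comp_zero_off hsupp (not_mem_cuboid_of_fst (by norm_num [Set.mem_Ioo])) 1
  have h2 : φ ![l 0 + 1, b, c] 1 = 0 :=
    comp_zero_off hsupp (not_mem_cuboid_of_fst
      (by
        have := hl 0
        norm_num [Set.mem_Ioo]
        try intro
        try linarith)) 1
  rw [h]; simp [h1, h2]

-- generic integrability helpers
lemma integrable2 (c : ℝ) {g : ℝ × ℝ → ℝ} (hg : Continuous g)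
    (h : ∀ q : ℝ × ℝ, (![q.1, q.2, c] : V3) ∉ cuboid l → g q = 0) : Integrable g := by
  apply hg.integrable_of_hasCompactSupport
  apply HasCompactSupport.intro ((isCompact_Icc (a := (0:ℝ)) (b := l 0)).prod
    (isCompact_Icc (a := (0:ℝ)) (b := l 1)))
  intro q hq
  apply h
  simp only [Set.mem_prod, not_and_or] at hq
  rcases hq with h' | h'
  · exact not_mem_cuboid_of_fst (fun hm => h' (Set.Ioo_subset_Icc_self hm))
  · exact not_mem_cuboid_of_snd (fun hm => h' (Set.Ioo_subset_Icc_self hm))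

lemma integrable3 {g : ℝ × ℝ × ℝ → ℝ} (hg : Continuous g)
    (h : ∀ p : ℝ × ℝ × ℝ, (![p.2.1, p.2.2, p.1] : V3) ∉ cuboid l → g p = 0) : Integrable g := by
  apply hg.integrable_of_hasCompactSupport
  apply HasCompactSupport.intro ((isCompact_Icc (a := (0:ℝ)) (b := l 2)).prod
    (((isCompact_Icc (a := (0:ℝ)) (b := l 0)).prod (isCompact_Icc (a := (0:ℝ)) (b := l 1)))))
  intro p hp
  apply h
  simp only [Set.mem_prod, not_and_or] at hp
  rcases hp with h' | h' | h'
  · exact not_mem_cuboid_of_trd (fun hm => h' (Set.Ioo_subset_Icc_self hm))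
  · exact not_mem_cuboid_of_fst (fun hm => h' (Set.Ioo_subset_Icc_self hm))
  · exact not_mem_cuboid_of_snd (fun hm => h' (Set.Ioo_subset_Icc_self hm))

lemma integrable1 (b c : ℝ) {g : ℝ → ℝ} (hg : Continuous g)
    (h : ∀ a : ℝ, (![a, b, c] : V3) ∉ cuboid l → g a = 0) : Integrable g := by
  apply hg.integrable_of_hasCompactSupport
  apply HasCompactSupport.intro (isCompact_Icc (a := (0:ℝ)) (b := l 0))
  intro a ha
  exact h a (not_mem_cuboid_of_fst (fun hm => ha (Set.Ioo_subset_Icc_self hm)))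


lemma rot3_two (x : V3) : rot3 φ x 2 = pder 1 0 φ x - pder 0 1 φ x := by simp [rot3]

lemma cont_rho (hsm : ContDiff ℝ (⊤ : ℕ∞) φ) : Continuous (fun x => rot3 φ x 2) := by
  simp only [rot3_two]
  exact (pder_cont hsm 1 0).sub (pder_cont hsm 0 1)

lemma int_a_pder01 (hl : ∀ i, 0 < l i) (hsm : ContDiff ℝ (⊤ : ℕ∞) φ)
    (hsupp : tsupport φ ⊆ cuboid l) (b c : ℝ) :
    ∫ a : ℝ, pder 0 1 φ ![a, b, c] = - ∫ a : ℝ, rot3 φ ![a, b, c] 2 := by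
  have hptw : ∀ a : ℝ, pder 0 1 φ ![a, b, c] = pder 1 0 φ ![a, b, c] - rot3 φ ![a, b, c] 2 := by
    intro a; rw [rot3_two]; ring
  simp_rw [hptw]
  rw [integral_sub, int_a_pder10 hl hsm hsupp, zero_sub]
  · exact integrable1 b c ((pder_cont hsm 1 0).comp (cont_line_a b c))
      (fun a ha => pder_zero_off hsupp ha 1 0)
  · exact integrable1 b c ((cont_rho hsm).comp (cont_line_a b c))
      (fun a ha => rot_zero_off hsupp ha 2)

-- integrability instances for fixed c
lemma int2_pder01 (hsm : ContDiff ℝ (⊤ : ℕ∞) φ) (hsupp : tsupport φ ⊆ cuboid l) (c : ℝ) :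
    Integrable (fun q : ℝ × ℝ => pder 0 1 φ ![q.1, q.2, c]) :=
  integrable2 c ((pder_cont hsm 0 1).comp (cont_mk2 c)) (fun q hq => pder_zero_off hsupp hq 0 1)

lemma int2_rho (hsm : ContDiff ℝ (⊤ : ℕ∞) φ) (hsupp : tsupport φ ⊆ cuboid l) (c : ℝ) :
    Integrable (fun q : ℝ × ℝ => rot3 φ ![q.1, q.2, c] 2) :=
  integrable2 c ((cont_rho hsm).comp (cont_mk2 c)) (fun q hq => rot_zero_off hsupp hq 2)

lemma int2_rho_abs (hsm : ContDiff ℝ (⊤ : ℕ∞) φ) (hsupp : tsupport φ ⊆ cuboid l) (c : ℝ) :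
    Integrable (fun q : ℝ × ℝ => |rot3 φ ![q.1, q.2, c] 2|) :=
  (int2_rho hsm hsupp c).abs

lemma int2_phi (hsm : ContDiff ℝ (⊤ : ℕ∞) φ) (hsupp : tsupport φ ⊆ cuboid l) (c : ℝ) :
    Integrable (fun q : ℝ × ℝ => φ ![q.1, q.2, c] 0) :=
  integrable2 c ((continuous_apply 0).comp (hsm.continuous.comp (cont_mk2 c)))
    (fun q hq => comp_zero_off hsupp hq 0)

/-- The key pointwise bound. -/
lemma key_bound (hl : ∀ i, 0 < l i) (hsm : ContDiff ℝ (⊤ : ℕ∞) φ)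
    (hsupp : tsupport φ ⊆ cuboid l) (b c : ℝ) (hb : (-1 : ℝ) ≤ b) :
    |∫ a : ℝ, φ ![a, b, c] 0| ≤ ∫ t : ℝ, ∫ a : ℝ, |rot3 φ ![a, t, c] 2| := by
  -- rewrite using FTC
  have step1 : ∫ a : ℝ, φ ![a, b, c] 0
      = ∫ a : ℝ, ∫ t in Set.Ioc (-1 : ℝ) b, pder 0 1 φ ![a, t, c] := by
    congr 1; funext a
    rw [ftc_b hsm hsupp a c b, intervalIntegral.integral_of_le hb]
  -- swap
  have hswapInt : Integrable (Function.uncurry fun a t => pder 0 1 φ ![a, t, c])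
      (volume.prod (volume.restrict (Set.Ioc (-1 : ℝ) b))) := by
    have h1 : Integrable (Function.uncurry fun a t => pder 0 1 φ ![a, t, c])
        ((volume : Measure ℝ).prod (volume : Measure ℝ)) := int2_pder01 hsm hsupp c
    have h2 : (volume : Measure ℝ).prod (volume.restrict (Set.Ioc (-1 : ℝ) b))
        = ((volume : Measure ℝ).prod (volume : Measure ℝ)).restrict
            (Set.univ ×ˢ Set.Ioc (-1 : ℝ) b) := by
      rw [← Measure.prod_restrict, Measure.restrict_univ]
    rw [h2]
    exact h1.restrict
  have step2 : ∫ a : ℝ, ∫ t in Set.Ioc (-1 : ℝ) b, pder 0 1 φ ![a, t, c]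
      = ∫ t in Set.Ioc (-1 : ℝ) b, ∫ a : ℝ, pder 0 1 φ ![a, t, c] :=
    integral_integral_swap hswapInt
  have step3 : ∫ t in Set.Ioc (-1 : ℝ) b, ∫ a : ℝ, pder 0 1 φ ![a, t, c]
      = - ∫ t in Set.Ioc (-1 : ℝ) b, ∫ a : ℝ, rot3 φ ![a, t, c] 2 := by
    rw [← integral_neg]
    congr 1; funext t
    rw [int_a_pder01 hl hsm hsupp t c]
  rw [step1, step2, step3, abs_neg]
  -- now bound
  have hIrho : Integrable (fun t : ℝ => ∫ a : ℝ, rot3 φ ![a, t, c] 2) :=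
    ((int2_rho hsm hsupp c).swap).integral_prod_left
  have hIrhoAbs : Integrable (fun t : ℝ => ∫ a : ℝ, |rot3 φ ![a, t, c] 2|) :=
    ((int2_rho_abs hsm hsupp c).swap).integral_prod_left
  calc |∫ t in Set.Ioc (-1 : ℝ) b, ∫ a : ℝ, rot3 φ ![a, t, c] 2|
      ≤ ∫ t in Set.Ioc (-1 : ℝ) b, |∫ a : ℝ, rot3 φ ![a, t, c] 2| := by
        simpa [Real.norm_eq_abs] using
          norm_integral_le_integral_norm (μ := volume.restrict (Set.Ioc (-1 : ℝ) b))
            (f := fun t => ∫ a : ℝ, rot3 φ ![a, t, c] 2)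
    _ ≤ ∫ t in Set.Ioc (-1 : ℝ) b, ∫ a : ℝ, |rot3 φ ![a, t, c] 2| := by
        apply integral_mono (hIrho.abs.restrict) (hIrhoAbs.restrict)
        intro t
        simpa [Real.norm_eq_abs] using
          norm_integral_le_integral_norm (f := fun a : ℝ => rot3 φ ![a, t, c] 2)
    _ ≤ ∫ t : ℝ, ∫ a : ℝ, |rot3 φ ![a, t, c] 2| := by
        apply setIntegral_le_integral hIrhoAbs
        filter_upwards with t
        exact integral_nonneg (fun a => abs_nonneg _)


def EQ3 : V3 ≃ᵐ ℝ × ℝ × ℝ :=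
  (MeasurableEquiv.piFinSuccAbove (fun _ : Fin 3 => ℝ) 2).trans
    ((MeasurableEquiv.refl ℝ).prodCongr (MeasurableEquiv.finTwoArrow))

lemma hEQ3 : MeasurePreserving EQ3 volume volume := by
  have h1 := MeasureTheory.volume_preserving_piFinSuccAbove (fun _ : Fin 3 => ℝ) 2
  have h2 := (MeasurePreserving.id (volume : Measure ℝ)).prod
    (MeasureTheory.volume_preserving_finTwoArrow ℝ)
  exact h2.comp h1

lemma EQ3_symm (a b c : ℝ) : EQ3.symm (c, a, b) = ![a, b, c] := by
  show (Fin.insertNthEquiv (fun _ : Fin 3 => ℝ) 2) (c, ![a,b]) = _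
  funext i
  fin_cases i <;> simp [Fin.insertNthEquiv, Fin.insertNth, Fin.succAboveCases] <;> rfl

lemma int3_phi (hsm : ContDiff ℝ (⊤ : ℕ∞) φ) (hsupp : tsupport φ ⊆ cuboid l) :
    Integrable (fun p : ℝ × ℝ × ℝ => φ ![p.2.1, p.2.2, p.1] 0) :=
  integrable3 ((continuous_apply 0).comp (hsm.continuous.comp cont_mk3))
    (fun p hp => comp_zero_off hsupp hp 0)

lemma int3_rho_abs (hsm : ContDiff ℝ (⊤ : ℕ∞) φ) (hsupp : tsupport φ ⊆ cuboid l) :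
    Integrable (fun p : ℝ × ℝ × ℝ => |rot3 φ ![p.2.1, p.2.2, p.1] 2|) :=
  integrable3 (((cont_rho hsm).comp cont_mk3).abs) (fun p hp => by
    rw [rot_zero_off hsupp hp 2, abs_zero])

/-- identification of the double integral with the planar integral -/
lemma G_eq_planar (hsm : ContDiff ℝ (⊤ : ℕ∞) φ) (hsupp : tsupport φ ⊆ cuboid l) (c : ℝ) :
    ∫ t : ℝ, ∫ a : ℝ, |rot3 φ ![a, t, c] 2|
      = ∫ q : ℝ × ℝ, |rot3 φ ![q.1, q.2, c] 2| := by
  rw [MeasureTheory.Measure.volume_eq_prod, integral_prod _ (int2_rho_abs hsm hsupp c)]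
  exact (integral_integral_swap (int2_rho_abs hsm hsupp c)).symm

lemma G_integrable (hsm : ContDiff ℝ (⊤ : ℕ∞) φ) (hsupp : tsupport φ ⊆ cuboid l) :
    Integrable (fun c : ℝ => ∫ t : ℝ, ∫ a : ℝ, |rot3 φ ![a, t, c] 2|) := by
  have h := (int3_rho_abs hsm hsupp).integral_prod_left
  refine h.congr ?_
  filter_upwards with c
  exact (G_eq_planar hsm hsupp c).symm

lemma G_nonneg (c : ℝ) : 0 ≤ ∫ t : ℝ, ∫ a : ℝ, |rot3 φ ![a, t, c] 2| :=
  integral_nonneg fun t => integral_nonneg fun a => abs_nonneg _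


lemma inner_phi (hsm : ContDiff ℝ (⊤ : ℕ∞) φ) (hsupp : tsupport φ ⊆ cuboid l) (α₂ β₂ c : ℝ) :
    ∫ q : ℝ × ℝ, (Set.univ ×ˢ Set.Ioo α₂ β₂).indicator (fun q : ℝ × ℝ => φ ![q.1, q.2, c] 0) q
      = ∫ b in Set.Ioo α₂ β₂, ∫ a : ℝ, φ ![a, b, c] 0 := by
  rw [integral_indicator (MeasurableSet.univ.prod measurableSet_Ioo)]
  have hmeas : (volume : Measure (ℝ × ℝ)).restrict (Set.univ ×ˢ Set.Ioo α₂ β₂)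
      = (volume : Measure ℝ).prod ((volume : Measure ℝ).restrict (Set.Ioo α₂ β₂)) := by
    rw [MeasureTheory.Measure.volume_eq_prod, ← Measure.prod_restrict, Measure.restrict_univ]
  rw [hmeas]
  have hint : Integrable (fun z : ℝ × ℝ => φ ![z.1, z.2, c] 0)
      ((volume : Measure ℝ).prod ((volume : Measure ℝ).restrict (Set.Ioo α₂ β₂))) := by
    have h2 : (volume : Measure ℝ).prod ((volume : Measure ℝ).restrict (Set.Ioo α₂ β₂))
        = ((volume : Measure ℝ).prod (volume : Measure ℝ)).restrict
            (Set.univ ×ˢ Set.Ioo α₂ β₂) := by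
      rw [← Measure.prod_restrict, Measure.restrict_univ]
    rw [h2]
    exact (int2_phi hsm hsupp c).restrict
  rw [integral_prod _ hint]
  exact integral_integral_swap (f := fun a b => φ ![a, b, c] 0) hint

/-- per-c computation for the φ side -/
lemma perc_phi (hsm : ContDiff ℝ (⊤ : ℕ∞) φ) (hsupp : tsupport φ ⊆ cuboid l) (α₂ β₂ α₃ β₃ c : ℝ) :
    ∫ q : ℝ × ℝ, (Set.Ioo α₃ β₃ ×ˢ (Set.univ ×ˢ Set.Ioo α₂ β₂)).indicator
        (fun p : ℝ × ℝ × ℝ => φ ![p.2.1, p.2.2, p.1] 0) (c, q)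
      = (Set.Ioo α₃ β₃).indicator
          (fun c => ∫ b in Set.Ioo α₂ β₂, ∫ a : ℝ, φ ![a, b, c] 0) c := by
  classical
  set S : Set (ℝ × ℝ × ℝ) := Set.Ioo α₃ β₃ ×ˢ (Set.univ ×ˢ Set.Ioo α₂ β₂) with hS
  by_cases hc : c ∈ Set.Ioo α₃ β₃
  · rw [Set.indicator_of_mem hc]
    rw [← inner_phi hsm hsupp α₂ β₂ c]
    congr 1
    funext q
    rw [Set.indicator_apply, Set.indicator_apply]
    have : (c, q) ∈ S ↔ q ∈ Set.univ ×ˢ Set.Ioo α₂ β₂ := by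
      simp [hS, hc]
    by_cases h : q ∈ Set.univ ×ˢ Set.Ioo α₂ β₂
    · rw [if_pos (this.2 h), if_pos h]
    · rw [if_neg (fun h' => h (this.1 h')), if_neg h]
  · rw [Set.indicator_of_notMem hc]
    have : ∀ q : ℝ × ℝ, S.indicator (fun p : ℝ × ℝ × ℝ => φ ![p.2.1, p.2.2, p.1] 0) (c, q) = 0 := by
      intro q
      apply Set.indicator_of_notMem
      simp only [hS, Set.mem_prod]
      exact fun h => absurd h.1 hc
    simp_rw [this, integral_zero]

/-- LHS decomposition. -/
lemma lhs_eq (hsm : ContDiff ℝ (⊤ : ℕ∞) φ) (hsupp : tsupport φ ⊆ cuboid l) (α₂ β₂ α₃ β₃ : ℝ) :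
    ∫ x in {x : V3 | x 1 ∈ Set.Ioo α₂ β₂ ∧ x 2 ∈ Set.Ioo α₃ β₃}, φ x 0
      = ∫ c : ℝ, (Set.Ioo α₃ β₃).indicator
          (fun c => ∫ b in Set.Ioo α₂ β₂, ∫ a : ℝ, φ ![a, b, c] 0) c := by
  classical
  set T : Set V3 := {x : V3 | x 1 ∈ Set.Ioo α₂ β₂ ∧ x 2 ∈ Set.Ioo α₃ β₃} with hT
  have hTmeas : MeasurableSet T :=
    ((measurable_pi_apply 1) measurableSet_Ioo).inter ((measurable_pi_apply 2) measurableSet_Ioo)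
  set S : Set (ℝ × ℝ × ℝ) := Set.Ioo α₃ β₃ ×ˢ (Set.univ ×ˢ Set.Ioo α₂ β₂) with hS
  have hSmeas : MeasurableSet S :=
    measurableSet_Ioo.prod (MeasurableSet.univ.prod measurableSet_Ioo)
  have step1 : ∫ x in T, φ x 0 = ∫ x : V3, T.indicator (fun x => φ x 0) x :=
    (integral_indicator hTmeas).symm
  have step2 : ∫ x : V3, T.indicator (fun x => φ x 0) x
      = ∫ p : ℝ × ℝ × ℝ, T.indicator (fun x => φ x 0) (EQ3.symm p) :=
    ((MeasurePreserving.symm EQ3 hEQ3).integral_comp' _).symm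
  have step3 : ∀ p : ℝ × ℝ × ℝ, T.indicator (fun x => φ x 0) (EQ3.symm p)
      = S.indicator (fun p : ℝ × ℝ × ℝ => φ ![p.2.1, p.2.2, p.1] 0) p := by
    rintro ⟨c, a, b⟩
    rw [Set.indicator_apply, Set.indicator_apply]
    have hmem : EQ3.symm (c, a, b) ∈ T ↔ (c, a, b) ∈ S := by
      rw [EQ3_symm]
      simp [hT, hS, and_comm]
    by_cases h : (c, a, b) ∈ S
    · rw [if_pos (hmem.2 h), if_pos h, EQ3_symm]
    · rw [if_neg (fun h' => h (hmem.1 h')), if_neg h]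
  have hF : Integrable (S.indicator (fun p : ℝ × ℝ × ℝ => φ ![p.2.1, p.2.2, p.1] 0)) :=
    (int3_phi hsm hsupp).indicator hSmeas
  rw [step1, step2]
  simp_rw [step3]
  rw [MeasureTheory.Measure.volume_eq_prod] at hF ⊢
  rw [integral_prod _ hF]
  congr 1
  funext c
  exact perc_phi hsm hsupp α₂ β₂ α₃ β₃ c

/-- Integrability of the LHS profile. -/
lemma lhs_int (hsm : ContDiff ℝ (⊤ : ℕ∞) φ) (hsupp : tsupport φ ⊆ cuboid l) (α₂ β₂ α₃ β₃ : ℝ) :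
    Integrable (fun c : ℝ => (Set.Ioo α₃ β₃).indicator
      (fun c => ∫ b in Set.Ioo α₂ β₂, ∫ a : ℝ, φ ![a, b, c] 0) c) := by
  classical
  have hSmeas : MeasurableSet (Set.Ioo α₃ β₃ ×ˢ ((Set.univ : Set ℝ) ×ˢ Set.Ioo α₂ β₂)) :=
    measurableSet_Ioo.prod (MeasurableSet.univ.prod measurableSet_Ioo)
  have hF : Integrable ((Set.Ioo α₃ β₃ ×ˢ ((Set.univ : Set ℝ) ×ˢ Set.Ioo α₂ β₂)).indicator
      (fun p : ℝ × ℝ × ℝ => φ ![p.2.1, p.2.2, p.1] 0)) :=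
    (int3_phi hsm hsupp).indicator hSmeas
  rw [MeasureTheory.Measure.volume_eq_prod] at hF
  have := hF.integral_prod_left
  refine this.congr ?_
  filter_upwards with c
  exact perc_phi hsm hsupp α₂ β₂ α₃ β₃ c

/-- RHS decomposition. -/
lemma rhs_eq (hsm : ContDiff ℝ (⊤ : ℕ∞) φ) (hsupp : tsupport φ ⊆ cuboid l) (α₃ β₃ : ℝ) :
    ∫ x in {x : V3 | x 2 ∈ Set.Ioo α₃ β₃}, |rot3 φ x 2|
      = ∫ c : ℝ, (Set.Ioo α₃ β₃).indicator
          (fun c => ∫ t : ℝ, ∫ a : ℝ, |rot3 φ ![a, t, c] 2|) c := by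
  classical
  set T : Set V3 := {x : V3 | x 2 ∈ Set.Ioo α₃ β₃} with hT
  have hTmeas : MeasurableSet T := (measurable_pi_apply 2) measurableSet_Ioo
  set S : Set (ℝ × ℝ × ℝ) := Set.Ioo α₃ β₃ ×ˢ (Set.univ : Set (ℝ × ℝ)) with hS
  have hSmeas : MeasurableSet S := measurableSet_Ioo.prod MeasurableSet.univ
  have step1 : ∫ x in T, |rot3 φ x 2| = ∫ x : V3, T.indicator (fun x => |rot3 φ x 2|) x :=
    (integral_indicator hTmeas).symm
  have step2 : ∫ x : V3, T.indicator (fun x => |rot3 φ x 2|) x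
      = ∫ p : ℝ × ℝ × ℝ, T.indicator (fun x => |rot3 φ x 2|) (EQ3.symm p) :=
    ((MeasurePreserving.symm EQ3 hEQ3).integral_comp' _).symm
  have step3 : ∀ p : ℝ × ℝ × ℝ, T.indicator (fun x => |rot3 φ x 2|) (EQ3.symm p)
      = S.indicator (fun p : ℝ × ℝ × ℝ => |rot3 φ ![p.2.1, p.2.2, p.1] 2|) p := by
    rintro ⟨c, a, b⟩
    rw [Set.indicator_apply, Set.indicator_apply]
    have hmem : EQ3.symm (c, a, b) ∈ T ↔ (c, a, b) ∈ S := by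
      rw [EQ3_symm]
      simp [hT, hS]
    by_cases h : (c, a, b) ∈ S
    · rw [if_pos (hmem.2 h), if_pos h, EQ3_symm]
    · rw [if_neg (fun h' => h (hmem.1 h')), if_neg h]
  have hF : Integrable (S.indicator (fun p : ℝ × ℝ × ℝ => |rot3 φ ![p.2.1, p.2.2, p.1] 2|)) :=
    (int3_rho_abs hsm hsupp).indicator hSmeas
  rw [step1, step2]
  simp_rw [step3]
  rw [MeasureTheory.Measure.volume_eq_prod] at hF ⊢
  rw [integral_prod _ hF]
  congr 1
  funext c
  by_cases hc : c ∈ Set.Ioo α₃ β₃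
  · rw [Set.indicator_of_mem hc, G_eq_planar hsm hsupp c]
    congr 1
    funext q
    rw [Set.indicator_of_mem (by simp [hS, hc])]
  · rw [Set.indicator_of_notMem hc]
    have : ∀ q : ℝ × ℝ, S.indicator
        (fun p : ℝ × ℝ × ℝ => |rot3 φ ![p.2.1, p.2.2, p.1] 2|) (c, q) = 0 := by
      intro q
      exact Set.indicator_of_notMem (by simp [hS, hc]) _
    simp_rw [this, integral_zero]


end Stmt6Aux

open Stmt6Aux in
/-- For a smooth vector field compactly supported in the cuboid `I`,
`|∫_{I₂₃} φ₁| ≤ (β₂ − α₂) ‖(rot φ)₃‖_{L¹(I₃)}`. -/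
theorem stmt6 (l : Fin 3 → ℝ) (hl : ∀ i, 0 < l i)
    (φ : V3 → V3) (hsm : ContDiff ℝ (⊤ : ℕ∞) φ) (hcs : HasCompactSupport φ)
    (hsupp : tsupport φ ⊆ cuboid l)
    (α₂ β₂ α₃ β₃ : ℝ) (hα₂ : 0 ≤ α₂) (h₂ : α₂ < β₂) (hβ₂ : β₂ ≤ l 1)
    (hα₃ : 0 ≤ α₃) (h₃ : α₃ < β₃) (hβ₃ : β₃ ≤ l 2) :
    |∫ x in beam (cuboid l) 1 2 α₂ β₂ α₃ β₃, φ x 0| ≤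
      (β₂ - α₂) * ∫ x in slab (cuboid l) 2 α₃ β₃, |rot3 φ x 2| := by
  classical
  have hcub : MeasurableSet (cuboid l) :=
    MeasurableSet.univ_pi (fun i => measurableSet_Ioo)
  -- beam integral = T integral
  have hBmeas : MeasurableSet (beam (cuboid l) 1 2 α₂ β₂ α₃ β₃) := by
    have : beam (cuboid l) 1 2 α₂ β₂ α₃ β₃
        = cuboid l ∩ ({x : V3 | x 1 ∈ Set.Ioo α₂ β₂} ∩ {x : V3 | x 2 ∈ Set.Ioo α₃ β₃}) := by
      ext x; simp only [beam, Set.mem_setOf_eq, Set.mem_inter_iff, Set.mem_Ioo]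
    rw [this]
    exact hcub.inter (((measurable_pi_apply 1) measurableSet_Ioo).inter
      ((measurable_pi_apply 2) measurableSet_Ioo))
  have hTmeas : MeasurableSet {x : V3 | x 1 ∈ Set.Ioo α₂ β₂ ∧ x 2 ∈ Set.Ioo α₃ β₃} :=
    ((measurable_pi_apply 1) measurableSet_Ioo).inter ((measurable_pi_apply 2) measurableSet_Ioo)
  have hbeam : ∫ x in beam (cuboid l) 1 2 α₂ β₂ α₃ β₃, φ x 0
      = ∫ x in {x : V3 | x 1 ∈ Set.Ioo α₂ β₂ ∧ x 2 ∈ Set.Ioo α₃ β₃}, φ x 0 := by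
    rw [← integral_indicator hBmeas, ← integral_indicator hTmeas]
    congr 1; funext x
    rw [Set.indicator_apply, Set.indicator_apply]
    by_cases hx : x ∈ cuboid l
    · have hiff : x ∈ beam (cuboid l) 1 2 α₂ β₂ α₃ β₃
          ↔ x ∈ {x : V3 | x 1 ∈ Set.Ioo α₂ β₂ ∧ x 2 ∈ Set.Ioo α₃ β₃} := by
        simp [beam, Set.mem_Ioo, hx]
      by_cases h : x ∈ beam (cuboid l) 1 2 α₂ β₂ α₃ β₃
      · rw [if_pos h, if_pos (hiff.1 h)]
      · rw [if_neg h, if_neg (fun h' => h (hiff.2 h'))]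
    · have h0 : φ x 0 = 0 := comp_zero_off hsupp hx 0
      split_ifs <;> simp [h0]
  -- slab integral = T' integral
  have hSlmeas : MeasurableSet (slab (cuboid l) 2 α₃ β₃) := by
    have : slab (cuboid l) 2 α₃ β₃ = cuboid l ∩ {x : V3 | x 2 ∈ Set.Ioo α₃ β₃} := by
      ext x; simp only [slab, Set.mem_setOf_eq, Set.mem_inter_iff, Set.mem_Ioo]
    rw [this]
    exact hcub.inter ((measurable_pi_apply 2) measurableSet_Ioo)
  have hT'meas : MeasurableSet {x : V3 | x 2 ∈ Set.Ioo α₃ β₃} :=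
    (measurable_pi_apply 2) measurableSet_Ioo
  have hslab : ∫ x in slab (cuboid l) 2 α₃ β₃, |rot3 φ x 2|
      = ∫ x in {x : V3 | x 2 ∈ Set.Ioo α₃ β₃}, |rot3 φ x 2| := by
    rw [← integral_indicator hSlmeas, ← integral_indicator hT'meas]
    congr 1; funext x
    rw [Set.indicator_apply, Set.indicator_apply]
    by_cases hx : x ∈ cuboid l
    · have hiff : x ∈ slab (cuboid l) 2 α₃ β₃ ↔ x ∈ {x : V3 | x 2 ∈ Set.Ioo α₃ β₃} := by
        simp [slab, Set.mem_Ioo, hx]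
      by_cases h : x ∈ slab (cuboid l) 2 α₃ β₃
      · rw [if_pos h, if_pos (hiff.1 h)]
      · rw [if_neg h, if_neg (fun h' => h (hiff.2 h'))]
    · have h0 : |rot3 φ x 2| = 0 := by rw [rot_zero_off hsupp hx 2, abs_zero]
      split_ifs <;> simp [h0]
  rw [hbeam, hslab, lhs_eq hsm hsupp α₂ β₂ α₃ β₃, rhs_eq hsm hsupp α₃ β₃]
  -- notation
  set G : ℝ → ℝ := fun c => ∫ t : ℝ, ∫ a : ℝ, |rot3 φ ![a, t, c] 2| with hG
  set X : ℝ → ℝ := fun c => (Set.Ioo α₃ β₃).indicator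
    (fun c => ∫ b in Set.Ioo α₂ β₂, ∫ a : ℝ, φ ![a, b, c] 0) c with hX
  have hXint : Integrable X := lhs_int hsm hsupp α₂ β₂ α₃ β₃
  have hGint : Integrable G := G_integrable hsm hsupp
  have hUpInt : Integrable (fun c => (Set.Ioo α₃ β₃).indicator
      (fun c => (β₂ - α₂) * G c) c) :=
    (hGint.const_mul (β₂ - α₂)).indicator measurableSet_Ioo
  -- pointwise bound
  have hptw : ∀ c : ℝ, |X c| ≤ (Set.Ioo α₃ β₃).indicator (fun c => (β₂ - α₂) * G c) c := by
    intro c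
    by_cases hc : c ∈ Set.Ioo α₃ β₃
    · rw [hX]
      simp only [Set.indicator_of_mem hc]
      have hA : Integrable (fun b : ℝ => ∫ a : ℝ, φ ![a, b, c] 0) :=
        ((int2_phi hsm hsupp c).swap).integral_prod_left
      calc |∫ b in Set.Ioo α₂ β₂, ∫ a : ℝ, φ ![a, b, c] 0|
          ≤ ∫ b in Set.Ioo α₂ β₂, |∫ a : ℝ, φ ![a, b, c] 0| := by
            simpa [Real.norm_eq_abs] using
              norm_integral_le_integral_norm (μ := volume.restrict (Set.Ioo α₂ β₂))
                (f := fun b => ∫ a : ℝ, φ ![a, b, c] 0)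
        _ ≤ ∫ _b in Set.Ioo α₂ β₂, G c := by
            refine setIntegral_mono_on (hA.abs.integrableOn) ?_ measurableSet_Ioo ?_
            · exact integrableOn_const measure_Ioo_lt_top.ne
            · intro b hb
              exact key_bound hl hsm hsupp b c (by have := hb.1; linarith)
        _ = (β₂ - α₂) * G c := by
            rw [setIntegral_const, Real.volume_real_Ioo_of_le (by linarith),
              smul_eq_mul]
    · rw [hX]
      simp [Set.indicator_of_notMem hc]
  -- assemble
  calc |∫ c : ℝ, X c| ≤ ∫ c : ℝ, |X c| := by
        simpa [Real.norm_eq_abs] using norm_integral_le_integral_norm (f := X)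
    _ ≤ ∫ c : ℝ, (Set.Ioo α₃ β₃).indicator (fun c => (β₂ - α₂) * G c) c :=
        integral_mono hXint.abs hUpInt hptw
    _ = (β₂ - α₂) * ∫ c : ℝ, (Set.Ioo α₃ β₃).indicator G c := by
        rw [← integral_const_mul]
        congr 1; funext c
        rw [Set.indicator_apply, Set.indicator_apply]
        split_ifs <;> simp
end
end

section
/- Let φ ∈ R̊(Ω) where Ω is a bounded domain contained in the cuboid I = (0,l₁)×(0,l₂)×(0,l₃). For any permutation (i,j,k) of (1,2,3) and any choices 0 ≤ α_j < β_j ≤ l_j, 0 ≤ α_k < β_k ≤ l_k, with Ω_{jk} := {x ∈ Ω : α_j < x_j < β_j, α_k < x_k < β_k} and Ω_k := {x ∈ Ω : α_k < x_k < β_k}, we have |∫_{Ω_{jk}} φ_i dx| ≤ (β_j − α_j) ‖(rot φ)_k‖_{L¹(Ω_k)}. -/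
open MeasureTheory Filter Topology

noncomputable section

section Aux
open Set

def Gw (a b s : ℝ) : ℝ := max 0 (b - max a s)

lemma Gw_nonneg (a b s : ℝ) : 0 ≤ Gw a b s := le_max_left _ _

lemma Gw_le (a b s : ℝ) (h : a ≤ b) : Gw a b s ≤ b - a := by
  unfold Gw
  apply max_le (by linarith)
  have := le_max_left a s; linarith

lemma Gw_continuous (a b : ℝ) : Continuous (Gw a b) := by
  unfold Gw; fun_prop

lemma vol_Ioo_inter_Ici (a b s : ℝ) (hab : a ≤ b) :
    (volume (Ioo a b ∩ Ici s)).toReal = Gw a b s := by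
  unfold Gw
  rcases le_total s a with hs | hs
  · have h1 : Ioo a b ∩ Ici s = Ioo a b := by
      ext x; simp only [mem_inter_iff, mem_Ioo, mem_Ici]
      constructor
      · tauto
      · intro hx; exact ⟨hx, by linarith [hx.1]⟩
    rw [h1, Real.volume_Ioo, ENNReal.toReal_ofReal (by linarith),
      max_eq_left hs, max_eq_right (by linarith)]
  · rw [max_eq_right hs]
    rcases le_or_gt s b with hsb | hsb
    · rcases eq_or_lt_of_le hs with rfl | has
      · have h1 : Ioo a b ∩ Ici a = Ioo a b := by
          ext x; simp only [mem_inter_iff, mem_Ioo, mem_Ici]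
          exact ⟨fun h => h.1, fun hx => ⟨hx, hx.1.le⟩⟩
        rw [h1, Real.volume_Ioo, ENNReal.toReal_ofReal (by linarith),
          max_eq_right (by linarith)]
      · have h1 : Ioo a b ∩ Ici s = Ico s b := by
          ext x; simp only [mem_inter_iff, mem_Ioo, mem_Ici, mem_Ico]
          constructor
          · rintro ⟨⟨_, h2⟩, h3⟩; exact ⟨h3, h2⟩
          · rintro ⟨h1, h2⟩; exact ⟨⟨by linarith, h2⟩, h1⟩
        rw [h1, Real.volume_Ico, ENNReal.toReal_ofReal (by linarith),
          max_eq_right (by linarith)]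
    · have h1 : Ioo a b ∩ Ici s = ∅ := by
        ext x; simp only [mem_inter_iff, mem_Ioo, mem_Ici, mem_empty_iff_false, iff_false]
        rintro ⟨⟨_, h2⟩, h3⟩; linarith
      rw [h1, measure_empty, ENNReal.toReal_zero, max_eq_left (by linarith)]

lemma oneDim (g : ℝ → ℝ) (hg : ContDiff ℝ 1 g) (hcs : HasCompactSupport g) (a b : ℝ)
    (hab : a ≤ b) :
    ∫ t in Ioo a b, g t = ∫ s, deriv g s * Gw a b s := by
  set g' := deriv g with hg'def
  have hg'c : Continuous g' := hg.continuous_deriv le_rfl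
  have hcs' : HasCompactSupport g' := hcs.deriv
  have hint' : Integrable g' := hg'c.integrable_of_hasCompactSupport hcs'
  set A : Set (ℝ × ℝ) := (Ioo a b ×ˢ univ) ∩ {p : ℝ × ℝ | p.2 ≤ p.1} with hA
  have hAmeas : MeasurableSet A :=
    (measurableSet_Ioo.prod MeasurableSet.univ).inter
      (measurableSet_le measurable_snd measurable_fst)
  have hAmem : ∀ p : ℝ × ℝ, p ∈ A ↔ p.1 ∈ Ioo a b ∧ p.2 ≤ p.1 := by
    intro p; simp [hA]
  set H : ℝ × ℝ → ℝ := A.indicator (fun p => g' p.2) with hH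
  have hHmeas : AEStronglyMeasurable H (volume.prod volume) :=
    ((hg'c.comp continuous_snd).aestronglyMeasurable).indicator hAmeas
  have hHint : Integrable H (volume.prod volume) := by
    have hbint : Integrable (fun p : ℝ × ℝ =>
        (Ioo a b).indicator (fun _ => (1:ℝ)) p.1 * |g' p.2|) (volume.prod volume) := by
      have h1 : Integrable ((Ioo a b).indicator (fun _ => (1:ℝ))) := by
        rw [integrable_indicator_iff measurableSet_Ioo]
        exact integrableOn_const (by simp [Real.volume_Ioo])
      exact h1.mul_prod hint'.abs
    refine hbint.mono' hHmeas (Filter.Eventually.of_forall fun p => ?_)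
    by_cases hp : p ∈ A
    · rw [hH, indicator_of_mem hp]
      have h1 : p.1 ∈ Ioo a b := ((hAmem p).1 hp).1
      simp [indicator_of_mem h1, Real.norm_eq_abs]
    · rw [hH, indicator_of_notMem hp]
      simp only [norm_zero]
      exact mul_nonneg (indicator_nonneg (fun _ _ => zero_le_one) _) (abs_nonneg _)
  calc ∫ t in Ioo a b, g t
      = ∫ t in Ioo a b, ∫ s in Iic t, g' s := by
        apply setIntegral_congr_fun measurableSet_Ioo
        intro t _
        exact (hcs.integral_Iic_deriv_eq hg t).symm
    _ = ∫ t, ∫ s, H (t, s) := by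
        rw [← integral_indicator measurableSet_Ioo]
        congr 1; funext t
        by_cases ht : t ∈ Ioo a b
        · rw [indicator_of_mem ht]
          have : ∀ s, H (t, s) = (Iic t).indicator g' s := by
            intro s
            by_cases hs : s ≤ t
            · rw [hH, indicator_of_mem ((hAmem (t,s)).2 ⟨ht, hs⟩),
                indicator_of_mem (show s ∈ Iic t from hs)]
            · rw [hH, indicator_of_notMem (fun hp => hs ((hAmem (t,s)).1 hp).2),
                indicator_of_notMem (show s ∉ Iic t from hs)]
          simp_rw [this]
          rw [integral_indicator measurableSet_Iic]
        · rw [indicator_of_notMem ht]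
          have : ∀ s, H (t, s) = 0 := by
            intro s
            rw [hH, indicator_of_notMem (fun hp => ht ((hAmem (t,s)).1 hp).1)]
          simp_rw [this, integral_zero]
    _ = ∫ s, ∫ t, H (t, s) := integral_integral_swap hHint
    _ = ∫ s, g' s * Gw a b s := by
        congr 1; funext s
        have : ∀ t, H (t, s) = (Ioo a b ∩ Ici s).indicator (fun _ => g' s) t := by
          intro t
          by_cases ht : t ∈ Ioo a b ∩ Ici s
          · rw [hH, indicator_of_mem ((hAmem (t,s)).2 ⟨ht.1, ht.2⟩), indicator_of_mem ht]
          · rw [hH, indicator_of_notMem, indicator_of_notMem ht]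
            intro hp
            exact ht ⟨((hAmem (t,s)).1 hp).1, ((hAmem (t,s)).1 hp).2⟩
        simp_rw [this]
        rw [integral_indicator (measurableSet_Ioo.inter measurableSet_Ici),
          setIntegral_const, measureReal_def, vol_Ioo_inter_Ici a b s hab, smul_eq_mul, mul_comm]

lemma fubini_coord (m : Fin 3) (f : V3 → ℝ) (hf : Integrable f) :
    ∫ x, f x = ∫ z : Fin 2 → ℝ, ∫ t : ℝ, f (m.insertNth t z) := by
  have hmp := (measurePreserving_piFinSuccAbove (fun _ : Fin 3 => (volume : Measure ℝ)) m).symm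
  have hemb := (MeasurableEquiv.piFinSuccAbove (fun _ : Fin 3 => ℝ) m).symm.measurableEmbedding
  have h2 : Integrable (fun p : ℝ × (Fin 2 → ℝ) =>
      f ((MeasurableEquiv.piFinSuccAbove (fun _ : Fin 3 => ℝ) m).symm p))
      ((volume : Measure ℝ).prod (Measure.pi fun _ => (volume : Measure ℝ))) := by
    exact (hmp.integrable_comp_emb hemb).mpr (by rwa [volume_pi] at hf)
  have h1 : ∫ x, f x = ∫ p : ℝ × (Fin 2 → ℝ),
      f ((MeasurableEquiv.piFinSuccAbove (fun _ : Fin 3 => ℝ) m).symm p)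
        ∂((volume : Measure ℝ).prod (Measure.pi fun _ => (volume : Measure ℝ))) := by
    rw [volume_pi]
    exact (hmp.integral_comp hemb f).symm
  rw [h1, integral_prod_symm _ h2]
  rw [← volume_pi]
  rfl


-- the update map written as an affine curve
lemma update_eq_affine (x0 : V3) (j : Fin 3) :
    Function.update x0 j = fun s => x0 + (s - x0 j) • (Pi.single j 1 : V3) := by
  funext s; funext m
  by_cases h : m = j
  · subst h; simp
  · simp [Function.update_of_ne h, Pi.single_eq_of_ne h]

lemma contDiff_slice (f : V3 → ℝ) (hf : ContDiff ℝ (⊤ : ℕ∞) f) (x0 : V3) (j : Fin 3) :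
    ContDiff ℝ 1 (fun s : ℝ => f (Function.update x0 j s)) := by
  apply (hf.of_le (by simp)).comp
  rw [update_eq_affine]
  exact contDiff_const.add ((contDiff_id.sub contDiff_const).smul contDiff_const)

lemma hasDerivAt_slice (f : V3 → ℝ) (hf : Differentiable ℝ f) (x0 : V3) (j : Fin 3) (t : ℝ) :
    HasDerivAt (fun s => f (Function.update x0 j s))
      (fderiv ℝ f (Function.update x0 j t) (Pi.single j 1)) t :=
  (hf _).hasFDerivAt.comp_hasDerivAt t (hasDerivAt_update x0 j t)

lemma deriv_slice (f : V3 → ℝ) (hf : Differentiable ℝ f) (x0 : V3) (j : Fin 3) (t : ℝ) :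
    deriv (fun s => f (Function.update x0 j s)) t
      = fderiv ℝ f (Function.update x0 j t) (Pi.single j 1) :=
  (hasDerivAt_slice f hf x0 j t).deriv

lemma hcs_slice (f : V3 → ℝ) (hcs : HasCompactSupport f) (x0 : V3) (j : Fin 3) :
    HasCompactSupport (fun s : ℝ => f (Function.update x0 j s)) := by
  obtain ⟨C, hC⟩ : ∃ C, ∀ x ∈ tsupport f, ‖x‖ ≤ C := by
    obtain ⟨C, hC⟩ := hcs.isBounded.subset_closedBall 0
    exact ⟨C, fun x hx => by simpa [dist_eq_norm] using hC hx⟩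
  have hsub : Function.support (fun s : ℝ => f (Function.update x0 j s)) ⊆
      Metric.closedBall (0:ℝ) C := by
    intro s hs
    have hmem : Function.update x0 j s ∈ tsupport f :=
      subset_tsupport f (by simpa using hs)
    have h1 : |s| ≤ ‖Function.update x0 j s‖ := by
      have := norm_le_pi_norm (Function.update x0 j s) j
      simpa using this
    simp only [Metric.mem_closedBall, dist_zero_right, Real.norm_eq_abs]
    exact h1.trans (hC _ hmem)
  exact HasCompactSupport.of_support_subset_isCompact (isCompact_closedBall 0 C) hsub

lemma comp_proj_contDiff (φ : V3 → V3) (hφ : ContDiff ℝ (⊤ : ℕ∞) φ) (i : Fin 3) :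
    ContDiff ℝ (⊤ : ℕ∞) (fun y => φ y i) := by
  exact (ContinuousLinearMap.proj (R := ℝ) (φ := fun _ : Fin 3 => ℝ) i).contDiff.comp hφ

lemma comp_proj_hcs (φ : V3 → V3) (hφ : HasCompactSupport φ) (i : Fin 3) :
    HasCompactSupport (fun y => φ y i) := by
  exact hφ.comp_left (g := fun v : V3 => v i) rfl

lemma pder_continuous (i j : Fin 3) (φ : V3 → V3) (hφ : ContDiff ℝ (⊤ : ℕ∞) φ) :
    Continuous (pder i j φ) := by
  have h1 : Continuous (fderiv ℝ (fun y => φ y i)) :=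
    (comp_proj_contDiff φ hφ i).continuous_fderiv (by simp)
  exact h1.clm_apply continuous_const

lemma pder_hcs (i j : Fin 3) (φ : V3 → V3) (hφ : HasCompactSupport φ) :
    HasCompactSupport (pder i j φ) := by
  have h1 : HasCompactSupport (fderiv ℝ (fun y => φ y i)) := (comp_proj_hcs φ hφ i).fderiv (𝕜 := ℝ)
  exact h1.comp_left (g := fun L : V3 →L[ℝ] ℝ => L (Pi.single j 1 : V3)) rfl

lemma pder_eq_zero_of_not_mem_tsupport (i j : Fin 3) (φ : V3 → V3) (x : V3)
    (hx : x ∉ tsupport φ) : pder i j φ x = 0 := by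
  have h1 : x ∉ tsupport (fun y => φ y i) := by
    intro h
    exact hx (closure_mono (Function.support_subset_iff.2
      (fun y hy => fun h0 => hy (by rw [h0]; rfl))) h)
  have h2 : fderiv ℝ (fun y => φ y i) x = 0 := by
    have : (fun y => φ y i) =ᶠ[𝓝 x] (fun _ => (0:ℝ)) := by
      have : IsOpen (tsupport (fun y => φ y i))ᶜ := isOpen_compl_iff.2 (isClosed_tsupport _)
      filter_upwards [this.mem_nhds h1] with y hy
      exact image_eq_zero_of_notMem_tsupport (f := fun y => φ y i) hy
    rw [this.fderiv_eq]
    exact fderiv_const_apply 0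
  simp [pder, h2]

lemma integral_deriv_zero (g : ℝ → ℝ) (hg : ContDiff ℝ 1 g) (hcs : HasCompactSupport g) :
    ∫ s, deriv g s = 0 := by
  obtain ⟨C, hC⟩ := hcs.isBounded.subset_closedBall 0
  set b := C + 1 with hb
  have hbs : ∀ s ∈ tsupport g, s ≤ C := by
    intro s hs
    have := hC hs
    simp only [Metric.mem_closedBall, dist_zero_right, Real.norm_eq_abs] at this
    exact (abs_le.1 this).2
  have h0 : ∀ s, b ≤ s → deriv g s = 0 := by
    intro s hsb
    by_contra h
    have : s ∈ tsupport g := support_deriv_subset (by simpa using h)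
    linarith [hbs s this]
  have h1 : ∫ s, deriv g s = ∫ s in Iic b, deriv g s := by
    symm
    apply setIntegral_eq_integral_of_forall_compl_eq_zero
    intro s hs
    exact h0 s (by simpa using le_of_lt (by simpa [Iic] using hs))
  rw [h1, hcs.integral_Iic_deriv_eq hg b]
  apply image_eq_zero_of_notMem_tsupport
  intro h
  linarith [hbs b h]

lemma integrable_mul_weight (f u : V3 → ℝ) (hf : Continuous f) (hcs : HasCompactSupport f)
    (hu : Measurable u) (C : ℝ) (hC : ∀ x, |u x| ≤ C) : Integrable (fun x => f x * u x) := by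
  have h1 : Integrable f := hf.integrable_of_hasCompactSupport hcs
  have h2 := h1.bdd_mul hu.aestronglyMeasurable
    (ae_of_all _ fun x => by simpa [Real.norm_eq_abs] using hC x)
  exact h2.congr (Filter.Eventually.of_forall fun x => mul_comm _ _)

lemma coreA (ψ : V3 → V3) (hψ : ContDiff ℝ (⊤ : ℕ∞) ψ) (hcs : HasCompactSupport ψ)
    (i j k : Fin 3) (hkj : k ≠ j) (aj bj ak bk : ℝ) (hj : aj ≤ bj) :
    ∫ x : V3, ψ x i * ((Ioo aj bj).indicator 1 (x j) * (Ioo ak bk).indicator 1 (x k))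
      = ∫ x : V3, pder i j ψ x * (Gw aj bj (x j) * (Ioo ak bk).indicator 1 (x k)) := by
  set w1 : ℝ → ℝ := (Ioo aj bj).indicator 1 with hw1def
  set w2 : ℝ → ℝ := (Ioo ak bk).indicator 1 with hw2def
  have hw1m : Measurable w1 := measurable_one.indicator measurableSet_Ioo
  have hw2m : Measurable w2 := measurable_one.indicator measurableSet_Ioo
  have hw1b : ∀ s, |w1 s| ≤ 1 := fun s => by
    rw [hw1def]; by_cases h : s ∈ Ioo aj bj <;> simp [indicator_of_mem, indicator_of_notMem, h]
  have hw2b : ∀ s, |w2 s| ≤ 1 := fun s => by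
    rw [hw2def]; by_cases h : s ∈ Ioo ak bk <;> simp [indicator_of_mem, indicator_of_notMem, h]
  have hψic : Continuous (fun y => ψ y i) := (comp_proj_contDiff ψ hψ i).continuous
  have hψics : HasCompactSupport (fun y => ψ y i) := comp_proj_hcs ψ hcs i
  have hψid : Differentiable ℝ (fun y => ψ y i) :=
    (comp_proj_contDiff ψ hψ i).differentiable (by simp)
  have hu1m : Measurable (fun x : V3 => w1 (x j) * w2 (x k)) :=
    (hw1m.comp (measurable_pi_apply j)).mul (hw2m.comp (measurable_pi_apply k))
  have hu2m : Measurable (fun x : V3 => Gw aj bj (x j) * w2 (x k)) :=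
    (((Gw_continuous aj bj).measurable).comp (measurable_pi_apply j)).mul
      (hw2m.comp (measurable_pi_apply k))
  have hint1 : Integrable (fun x : V3 => ψ x i * (w1 (x j) * w2 (x k))) := by
    refine integrable_mul_weight (fun y => ψ y i) (fun x => w1 (x j) * w2 (x k))
      hψic hψics hu1m 1 (fun x => ?_)
    rw [abs_mul]
    calc |w1 (x j)| * |w2 (x k)| ≤ 1 * 1 :=
          mul_le_mul (hw1b _) (hw2b _) (abs_nonneg _) zero_le_one
      _ = 1 := one_mul 1
  have hint2 : Integrable (fun x : V3 => pder i j ψ x * (Gw aj bj (x j) * w2 (x k))) := by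
    refine integrable_mul_weight (pder i j ψ) (fun x => Gw aj bj (x j) * w2 (x k))
      (pder_continuous i j ψ hψ) (pder_hcs i j ψ hcs) hu2m (|bj - aj|) (fun x => ?_)
    rw [abs_mul]
    calc |Gw aj bj (x j)| * |w2 (x k)| ≤ (bj - aj) * 1 := by
          apply mul_le_mul _ (hw2b _) (abs_nonneg _) (by linarith)
          rw [abs_of_nonneg (Gw_nonneg _ _ _)]
          exact Gw_le _ _ _ hj
      _ ≤ |bj - aj| := by rw [mul_one]; exact le_abs_self _
  rw [fubini_coord j _ hint1, fubini_coord j _ hint2]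
  congr 1; funext z
  set x0 : V3 := j.insertNth (0:ℝ) z with hx0
  have hins : ∀ t : ℝ, j.insertNth t z = Function.update x0 j t := fun t => by
    rw [hx0]; exact (Fin.update_insertNth (α := fun _ => ℝ) j 0 t z).symm
  have hjt : ∀ t : ℝ, (j.insertNth t z : V3) j = t := fun t => by simp
  have hk0 : ∀ t : ℝ, (j.insertNth t z : V3) k = x0 k := fun t => by
    rw [hins t, Function.update_of_ne hkj]
  set g : ℝ → ℝ := fun t => ψ (Function.update x0 j t) i with hgdef
  have hgc : ContDiff ℝ 1 g := contDiff_slice _ (comp_proj_contDiff ψ hψ i) x0 j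
  have hgcs : HasCompactSupport g := hcs_slice _ (comp_proj_hcs ψ hcs i) x0 j
  have hderiv : ∀ s, deriv g s = pder i j ψ (Function.update x0 j s) := fun s =>
    deriv_slice _ hψid x0 j s
  calc ∫ t : ℝ, ψ (j.insertNth t z) i
        * (w1 ((j.insertNth t z : V3) j) * w2 ((j.insertNth t z : V3) k))
      = ∫ t : ℝ, w2 (x0 k) * (g t * w1 t) := by
        congr 1; funext t
        rw [hjt t, hk0 t, hins t, hgdef]
        ring
    _ = w2 (x0 k) * ∫ t : ℝ, g t * w1 t := integral_const_mul _ _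
    _ = w2 (x0 k) * ∫ t in Ioo aj bj, g t := by
        congr 1
        have : (fun t => g t * w1 t) = (Ioo aj bj).indicator g := by
          funext t
          by_cases h : t ∈ Ioo aj bj
          · rw [hw1def]; simp [indicator_of_mem h]
          · rw [hw1def]; simp [indicator_of_notMem h]
        rw [this, integral_indicator measurableSet_Ioo]
    _ = w2 (x0 k) * ∫ s : ℝ, deriv g s * Gw aj bj s := by
        rw [oneDim g hgc hgcs aj bj hj]
    _ = ∫ s : ℝ, w2 (x0 k) * (deriv g s * Gw aj bj s) := (integral_const_mul _ _).symm
    _ = ∫ t : ℝ, pder i j ψ (j.insertNth t z)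
          * (Gw aj bj ((j.insertNth t z : V3) j) * w2 ((j.insertNth t z : V3) k)) := by
        congr 1; funext t
        rw [hjt t, hk0 t, hins t, hderiv t]
        ring

lemma coreB (ψ : V3 → V3) (hψ : ContDiff ℝ (⊤ : ℕ∞) ψ) (hcs : HasCompactSupport ψ)
    (m a : Fin 3) (u : V3 → ℝ) (hu : Measurable u) (C : ℝ) (hC : ∀ x, |u x| ≤ C)
    (hind : ∀ (x : V3) (t : ℝ), u (Function.update x a t) = u x) :
    ∫ x : V3, pder m a ψ x * u x = 0 := by
  have hint : Integrable (fun x : V3 => pder m a ψ x * u x) :=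
    integrable_mul_weight _ _ (pder_continuous m a ψ hψ) (pder_hcs m a ψ hcs) hu C hC
  rw [fubini_coord a _ hint]
  have : ∀ z : Fin 2 → ℝ, ∫ t : ℝ, pder m a ψ (a.insertNth t z) * u (a.insertNth t z) = 0 := by
    intro z
    set x0 : V3 := a.insertNth (0:ℝ) z with hx0
    have hins : ∀ t : ℝ, a.insertNth t z = Function.update x0 a t := fun t => by
      rw [hx0]; exact (Fin.update_insertNth (α := fun _ => ℝ) a 0 t z).symm
    set h : ℝ → ℝ := fun t => ψ (Function.update x0 a t) m with hhdef
    have hhc : ContDiff ℝ 1 h := contDiff_slice _ (comp_proj_contDiff ψ hψ m) x0 a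
    have hhcs : HasCompactSupport h := hcs_slice _ (comp_proj_hcs ψ hcs m) x0 a
    have hderiv : ∀ s, deriv h s = pder m a ψ (Function.update x0 a s) := fun s =>
      deriv_slice _ ((comp_proj_contDiff ψ hψ m).differentiable (by simp)) x0 a s
    calc ∫ t : ℝ, pder m a ψ (a.insertNth t z) * u (a.insertNth t z)
        = ∫ t : ℝ, deriv h t * u x0 := by
          congr 1; funext t
          rw [hins t, hderiv t, hind x0 t]
      _ = (∫ t : ℝ, deriv h t) * u x0 := integral_mul_const _ _
      _ = 0 := by rw [integral_deriv_zero h hhc hhcs, zero_mul]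
  simp_rw [this, integral_zero]


lemma rot_cases (i j k : Fin 3) (hij : i ≠ j) (hik : i ≠ k) (hjk : j ≠ k) :
    (∀ (ψ : V3 → V3) (x : V3), pder i j ψ x - pder j i ψ x = rot3 ψ x k) ∨
    (∀ (ψ : V3 → V3) (x : V3), pder i j ψ x - pder j i ψ x = - rot3 ψ x k) := by
  fin_cases i <;> fin_cases j <;> fin_cases k <;>
    first
      | (exact absurd rfl hij)
      | (exact absurd rfl hik)
      | (exact absurd rfl hjk)
      | (left; intro ψ x; simp [rot3]; all_goals ring1)
      | (right; intro ψ x; simp [rot3]; all_goals ring1)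

lemma core (ψ : V3 → V3) (hψ : ContDiff ℝ (⊤ : ℕ∞) ψ) (hcs : HasCompactSupport ψ)
    (i j k : Fin 3) (hij : i ≠ j) (hik : i ≠ k) (hjk : j ≠ k)
    (aj bj ak bk : ℝ) (hj : aj ≤ bj) :
    |∫ x : V3, ψ x i * ((Ioo aj bj).indicator 1 (x j) * (Ioo ak bk).indicator 1 (x k))|
      = |∫ x : V3, rot3 ψ x k * (Gw aj bj (x j) * (Ioo ak bk).indicator 1 (x k))| := by
  set u : V3 → ℝ := fun x => Gw aj bj (x j) * (Ioo ak bk).indicator 1 (x k) with hudef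
  have hw2b : ∀ s : ℝ, |(Ioo ak bk).indicator (1 : ℝ → ℝ) s| ≤ 1 := fun s => by
    by_cases h : s ∈ Ioo ak bk <;> simp [indicator_of_mem, indicator_of_notMem, h]
  have hum : Measurable u :=
    (((Gw_continuous aj bj).measurable).comp (measurable_pi_apply j)).mul
      ((measurable_one.indicator measurableSet_Ioo).comp (measurable_pi_apply k))
  have hub : ∀ x, |u x| ≤ |bj - aj| := fun x => by
    rw [hudef]
    simp only
    rw [abs_mul]
    calc |Gw aj bj (x j)| * |(Ioo ak bk).indicator 1 (x k)| ≤ (bj - aj) * 1 := by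
          apply mul_le_mul _ (hw2b _) (abs_nonneg _) (by linarith)
          rw [abs_of_nonneg (Gw_nonneg _ _ _)]
          exact Gw_le _ _ _ hj
      _ ≤ |bj - aj| := by rw [mul_one]; exact le_abs_self _
  have hint2 : Integrable (fun x : V3 => pder i j ψ x * u x) :=
    integrable_mul_weight _ _ (pder_continuous i j ψ hψ) (pder_hcs i j ψ hcs) hum _ hub
  have hint3 : Integrable (fun x : V3 => pder j i ψ x * u x) :=
    integrable_mul_weight _ _ (pder_continuous j i ψ hψ) (pder_hcs j i ψ hcs) hum _ hub
  have hzero : ∫ x : V3, pder j i ψ x * u x = 0 := by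
    apply coreB ψ hψ hcs j i u hum _ hub
    intro x t
    rw [hudef]
    simp only
    rw [Function.update_of_ne (Ne.symm hij), Function.update_of_ne (Ne.symm hik)]
  have hsub : ∫ x : V3, pder i j ψ x * u x
      = ∫ x : V3, (pder i j ψ x - pder j i ψ x) * u x := by
    have : (fun x : V3 => (pder i j ψ x - pder j i ψ x) * u x)
        = fun x : V3 => pder i j ψ x * u x - pder j i ψ x * u x := funext fun x => by ring
    rw [this, integral_sub hint2 hint3, hzero, sub_zero]
  rw [coreA ψ hψ hcs i j k (Ne.symm hjk) aj bj ak bk hj, hsub]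
  rcases rot_cases i j k hij hik hjk with h | h
  · congr 2
    funext x
    rw [h ψ x]
  · have h2 : ∀ x : V3, (pder i j ψ x - pder j i ψ x) * u x = -(rot3 ψ x k * u x) :=
      fun x => by rw [h ψ x]; ring
    simp_rw [h2, integral_neg, abs_neg]
    rfl

lemma setIntegral_weight (Ω : Set V3) (f : V3 → ℝ)
    (hf0 : ∀ x, x ∉ Ω → f x = 0) (B : Set V3) (hB : MeasurableSet B) :
    ∫ x in Ω ∩ B, f x = ∫ x, f x * B.indicator 1 x := by
  have h1 : (fun x => f x * B.indicator 1 x) = B.indicator f := by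
    funext x
    by_cases h : x ∈ B <;> simp [indicator_of_mem, indicator_of_notMem, h]
  rw [h1, integral_indicator hB]
  exact (setIntegral_eq_of_subset_of_forall_diff_eq_zero hB inter_subset_right
    (fun x hx => hf0 x (fun h => hx.2 ⟨h, hx.1⟩))).symm

lemma tendsto_setIntegral_L2 {Ω : Set V3} (hvol : volume Ω < ⊤) {S : Set V3}
    (hS : MeasurableSet S) (hSΩ : S ⊆ Ω)
    {f : ℕ → V3 → V3} {g : V3 → V3}
    (hf : ∀ n, MemLp (f n) 2 (volume.restrict Ω)) (hg : MemLp g 2 (volume.restrict Ω))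
    (m : Fin 3) {u : V3 → ℝ} (hu : Measurable u) {C : ℝ} (hC : ∀ x, |u x| ≤ C)
    (hconv : Tendsto (fun n => ∫ x in Ω, ∑ i : Fin 3, (f n x i - g x i) ^ 2) atTop (𝓝 0)) :
    Tendsto (fun n => ∫ x in S, f n x m * u x) atTop (𝓝 (∫ x in S, g x m * u x)) := by
  haveI instS : IsFiniteMeasure (volume.restrict S) := by
    constructor; rw [Measure.restrict_apply_univ]; exact (measure_mono hSΩ).trans_lt hvol
  haveI instO : IsFiniteMeasure (volume.restrict Ω) := by
    constructor; rw [Measure.restrict_apply_univ]; exact hvol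
  have hC0 : 0 ≤ C := le_trans (abs_nonneg _) (hC (fun _ => 0))
  have hrS : (volume : Measure V3).restrict S = (volume.restrict Ω).restrict S := by
    rw [Measure.restrict_restrict hS, inter_eq_self_of_subset_left hSΩ]
  have hcompO : ∀ (h : V3 → V3) (i : Fin 3), MemLp h 2 (volume.restrict Ω) →
      MemLp (fun x => h x i) 2 (volume.restrict Ω) := fun h i hh =>
    (ContinuousLinearMap.proj (R := ℝ) (φ := fun _ : Fin 3 => ℝ) i).comp_memLp' hh
  have hcompS : ∀ (h : V3 → V3) (i : Fin 3), MemLp h 2 (volume.restrict Ω) →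
      MemLp (fun x => h x i) 2 (volume.restrict S) := fun h i hh => by
    rw [hrS]; exact (hcompO h i hh).restrict S
  set d : ℕ → V3 → ℝ := fun n x => f n x m - g x m with hddef
  have hdL2 : ∀ n, MemLp (d n) 2 (volume.restrict S) := fun n =>
    (hcompS _ m (hf n)).sub (hcompS _ m hg)
  have hdint : ∀ n, Integrable (d n) (volume.restrict S) := fun n =>
    (hdL2 n).integrable one_le_two
  have hdsq : ∀ n, Integrable (fun x => d n x ^ 2) (volume.restrict S) := fun n =>
    (hdL2 n).integrable_sq
  have hsumO : ∀ n, Integrable (fun x => ∑ i : Fin 3, (f n x i - g x i) ^ 2)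
      (volume.restrict Ω) := by
    intro n
    apply integrable_finset_sum
    intro i _
    exact ((hcompO _ i (hf n)).sub (hcompO _ i hg)).integrable_sq
  have hsumS : ∀ n, Integrable (fun x => ∑ i : Fin 3, (f n x i - g x i) ^ 2)
      (volume.restrict S) := by
    intro n
    apply integrable_finset_sum
    intro i _
    exact ((hcompS _ i (hf n)).sub (hcompS _ i hg)).integrable_sq
  have hmul : ∀ (w : V3 → ℝ), Integrable w (volume.restrict S) →
      Integrable (fun x => w x * u x) (volume.restrict S) := by
    intro w hw
    have := hw.bdd_mul hu.aestronglyMeasurable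
      (ae_of_all _ fun x => by simpa [Real.norm_eq_abs] using hC x)
    exact this.congr (Filter.Eventually.of_forall fun x => mul_comm _ _)
  have hfu : ∀ n, Integrable (fun x => f n x m * u x) (volume.restrict S) := fun n =>
    hmul _ ((hcompS _ m (hf n)).integrable one_le_two)
  have hgu : Integrable (fun x => g x m * u x) (volume.restrict S) :=
    hmul _ ((hcompS _ m hg).integrable one_le_two)
  have hdu : ∀ n, Integrable (fun x => d n x * u x) (volume.restrict S) := fun n =>
    hmul _ (hdint n)
  -- the error term tends to zero in L¹
  have htendE : Tendsto (fun n => ∫ x in S, |d n x|) atTop (𝓝 0) := by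
    rw [Metric.tendsto_atTop]
    intro ε hε
    set V := (volume S).toReal with hVdef
    have hV0 : (0:ℝ) ≤ V := ENNReal.toReal_nonneg
    set δ := ε / (2 * (V + 1)) with hδdef
    have hδ : 0 < δ := by rw [hδdef]; positivity
    have hδV : δ * (V + 1) = ε / 2 := by rw [hδdef]; field_simp
    obtain ⟨N, hN⟩ := (Metric.tendsto_atTop.1 hconv) (δ * ε) (by positivity)
    refine ⟨N, fun n hn => ?_⟩
    have hIn : ∫ x in Ω, ∑ i : Fin 3, (f n x i - g x i) ^ 2 < δ * ε := by
      have := hN n hn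
      rw [Real.dist_eq, sub_zero] at this
      exact lt_of_le_of_lt (le_abs_self _) this
    have hJ1 : ∫ x in S, d n x ^ 2 ≤ ∫ x in S, ∑ i : Fin 3, (f n x i - g x i) ^ 2 := by
      apply integral_mono (hdsq n) (hsumS n)
      intro x
      exact Finset.single_le_sum (f := fun i => (f n x i - g x i) ^ 2)
        (fun i _ => sq_nonneg _) (Finset.mem_univ m)
    have hJ2 : ∫ x in S, ∑ i : Fin 3, (f n x i - g x i) ^ 2
        ≤ ∫ x in Ω, ∑ i : Fin 3, (f n x i - g x i) ^ 2 := by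
      apply setIntegral_mono_set (hsumO n)
      · exact Filter.Eventually.of_forall fun x =>
          Finset.sum_nonneg fun i _ => sq_nonneg _
      · exact HasSubset.Subset.eventuallyLE hSΩ
    have hpt : ∀ x : V3, |d n x| ≤ δ / 2 + d n x ^ 2 / (2 * δ) := by
      intro x
      have h1 := sq_nonneg (|d n x| - δ)
      have h2 : |d n x| ^ 2 = d n x ^ 2 := sq_abs _
      calc |d n x| ≤ (δ ^ 2 + d n x ^ 2) / (2 * δ) := by
            rw [le_div_iff₀ (by positivity)]
            nlinarith
        _ = δ / 2 + d n x ^ 2 / (2 * δ) := by field_simp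
    have hEb : ∫ x in S, |d n x| ≤ V * (δ / 2) + (∫ x in S, d n x ^ 2) / (2 * δ) := by
      calc ∫ x in S, |d n x| ≤ ∫ x in S, (δ / 2 + d n x ^ 2 / (2 * δ)) :=
            integral_mono (hdint n).abs
              ((integrable_const _).add ((hdsq n).div_const _)) hpt
        _ = V * (δ / 2) + (∫ x in S, d n x ^ 2) / (2 * δ) := by
            rw [integral_add (integrable_const _) ((hdsq n).div_const _),
              setIntegral_const, measureReal_def, integral_div, smul_eq_mul]
    have hE0 : 0 ≤ ∫ x in S, |d n x| := integral_nonneg fun x => abs_nonneg _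
    rw [Real.dist_eq, sub_zero, abs_of_nonneg hE0]
    have hd1 : (∫ x in S, d n x ^ 2) / (2 * δ) < ε / 2 := by
      rw [div_lt_iff₀ (by positivity)]
      have : ∫ x in S, d n x ^ 2 < δ * ε := lt_of_le_of_lt (hJ1.trans hJ2) hIn
      nlinarith
    have hd2 : V * (δ / 2) ≤ ε / 4 := by nlinarith
    linarith
  -- combine
  have heq : ∀ n, ∫ x in S, f n x m * u x
      = (∫ x in S, g x m * u x) + ∫ x in S, d n x * u x := by
    intro n
    rw [← integral_add hgu (hdu n)]
    congr 1; funext x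
    rw [hddef]; ring
  have htend0 : Tendsto (fun n => ∫ x in S, d n x * u x) atTop (𝓝 0) := by
    refine squeeze_zero_norm (fun n => ?_) (by simpa using htendE.const_mul C)
    calc ‖∫ x in S, d n x * u x‖ ≤ ∫ x in S, ‖d n x * u x‖ :=
          norm_integral_le_integral_norm _
      _ ≤ ∫ x in S, C * |d n x| := by
          apply integral_mono ((hdu n).norm) ((hdint n).abs.const_mul C)
          intro x
          show ‖d n x * u x‖ ≤ C * |d n x|
          rw [Real.norm_eq_abs, abs_mul, mul_comm]
          exact mul_le_mul_of_nonneg_right (hC x) (abs_nonneg _)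
      _ = C * ∫ x in S, |d n x| := integral_const_mul _ _
  simp_rw [heq]
  simpa using tendsto_const_nhds.add htend0

lemma rot3_continuous (ψ : V3 → V3) (hψ : ContDiff ℝ (⊤ : ℕ∞) ψ) : Continuous (rot3 ψ) := by
  apply continuous_pi
  intro m
  fin_cases m <;> simp only [rot3] <;>
    [skip; skip; skip] <;>
    first
      | exact ((pder_continuous 2 1 ψ hψ).sub (pder_continuous 1 2 ψ hψ))
      | exact ((pder_continuous 0 2 ψ hψ).sub (pder_continuous 2 0 ψ hψ))
      | exact ((pder_continuous 1 0 ψ hψ).sub (pder_continuous 0 1 ψ hψ))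

lemma rot3_eq_zero (ψ : V3 → V3) (x : V3) (hx : x ∉ tsupport ψ) : rot3 ψ x = 0 := by
  have hz : ∀ a b : Fin 3, pder a b ψ x = 0 := fun a b =>
    pder_eq_zero_of_not_mem_tsupport a b ψ x hx
  funext m
  fin_cases m <;> simp [rot3, hz]

lemma rot3_hcs (ψ : V3 → V3) (hcs : HasCompactSupport ψ) : HasCompactSupport (rot3 ψ) :=
  HasCompactSupport.intro hcs (fun x hx => rot3_eq_zero ψ x hx)

lemma memL2_of_testlike (Ω : Set V3) (hvol : volume Ω < ⊤) (h : V3 → V3)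
    (hc : Continuous h) (hcs : HasCompactSupport h) : MemLp h 2 (volume.restrict Ω) := by
  haveI : IsFiniteMeasure (volume.restrict Ω) := by
    constructor; rw [Measure.restrict_apply_univ]; exact hvol
  obtain ⟨x0, hx0⟩ := (hc.norm).exists_forall_ge_of_hasCompactSupport hcs.norm
  exact MemLp.of_bound hc.aestronglyMeasurable ‖h x0‖ (ae_of_all _ hx0)

end Aux

open Set in
/-- Theorem R: For `φ ∈ R̊(Ω)` with weak curl `rφ`, `Ω ⊆ I`, any
permutation `(i,j,k)` of the indices and admissible `α_j < β_j`, `α_k < β_k`: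
`|∫_{Ω_{jk}} φ_i| ≤ (β_j − α_j) ‖(rot φ)_k‖_{L¹(Ω_k)}`. -/
theorem stmt7 (Ω : Set V3) (hΩo : IsOpen Ω) (hΩc : IsConnected Ω)
    (hΩb : Bornology.IsBounded Ω)
    (l : Fin 3 → ℝ) (hl : ∀ m, 0 < l m) (hΩl : Ω ⊆ cuboid l)
    (φ rφ : V3 → V3) (hφ : MemRc Ω φ rφ) (hφ2 : L2 Ω φ) (hrφ2 : L2 Ω rφ)
    (i j k : Fin 3) (hij : i ≠ j) (hik : i ≠ k) (hjk : j ≠ k)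
    (αj βj αk βk : ℝ) (hαj : 0 ≤ αj) (hj : αj < βj) (hβj : βj ≤ l j)
    (hαk : 0 ≤ αk) (hk : αk < βk) (hβk : βk ≤ l k) :
    |∫ x in beam Ω j k αj βj αk βk, φ x i| ≤
      (βj - αj) * ∫ x in slab Ω k αk βk, |rφ x k| := by
  obtain ⟨φs, hts, hφconv, hrconv⟩ := hφ
  have hvol : volume Ω < ⊤ := hΩb.measure_lt_top
  haveI instO : IsFiniteMeasure (volume.restrict Ω) := by
    constructor; rw [Measure.restrict_apply_univ]; exact hvol
  have hΩm : MeasurableSet Ω := hΩo.measurableSet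
  set B' : Set V3 := {x : V3 | x j ∈ Ioo αj βj ∧ x k ∈ Ioo αk βk} with hB'
  set S' : Set V3 := {x : V3 | x k ∈ Ioo αk βk} with hS'
  have hB'm : MeasurableSet B' :=
    MeasurableSet.inter ((measurable_pi_apply j) measurableSet_Ioo)
      ((measurable_pi_apply k) measurableSet_Ioo)
  have hS'm : MeasurableSet S' := (measurable_pi_apply k) measurableSet_Ioo
  have hbeam : beam Ω j k αj βj αk βk = Ω ∩ B' := by
    ext x; simp [beam, hB', Set.mem_Ioo]; tauto
  have hslab : slab Ω k αk βk = Ω ∩ S' := by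
    ext x; simp [slab, hS', Set.mem_Ioo]; tauto
  have hbm : MeasurableSet (beam Ω j k αj βj αk βk) := hbeam ▸ (hΩm.inter hB'm)
  have hsm : MeasurableSet (slab Ω k αk βk) := hslab ▸ (hΩm.inter hS'm)
  have hbsub : beam Ω j k αj βj αk βk ⊆ Ω := fun x hx => hx.1
  have hssub : slab Ω k αk βk ⊆ Ω := fun x hx => hx.1
  have hGb : ∀ x : V3, |Gw αj βj (x j)| ≤ βj - αj := fun x => by
    rw [abs_of_nonneg (Gw_nonneg _ _ _)]; exact Gw_le _ _ _ hj.le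
  have hGm : Measurable (fun x : V3 => Gw αj βj (x j)) :=
    ((Gw_continuous αj βj).measurable).comp (measurable_pi_apply j)
  -- L² bounds for the approximating fields
  have hL2φs : ∀ n, MemLp (φs n) 2 (volume.restrict Ω) := fun n =>
    memL2_of_testlike Ω hvol (φs n) (hts n).1.continuous (hts n).2.1
  have hL2rot : ∀ n, MemLp (rot3 (φs n)) 2 (volume.restrict Ω) := fun n =>
    memL2_of_testlike Ω hvol _ (rot3_continuous _ (hts n).1) (rot3_hcs _ (hts n).2.1)
  -- the identity for each approximating test field
  have hindB : ∀ x : V3, B'.indicator (1 : V3 → ℝ) x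
      = (Ioo αj βj).indicator 1 (x j) * (Ioo αk βk).indicator 1 (x k) := by
    intro x
    by_cases h1 : αj < x j ∧ x j < βj <;> by_cases h2 : αk < x k ∧ x k < βk <;>
      simp [Set.indicator_apply, hB', Set.mem_setOf_eq, Set.mem_Ioo, h1, h2]
  have hindS : ∀ x : V3, S'.indicator (1 : V3 → ℝ) x = (Ioo αk βk).indicator 1 (x k) := by
    intro x
    by_cases h2 : αk < x k ∧ x k < βk <;>
      simp [Set.indicator_apply, hS', Set.mem_setOf_eq, Set.mem_Ioo, h2]
  have hiden : ∀ n, |∫ x in beam Ω j k αj βj αk βk, φs n x i|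
      = |∫ x in slab Ω k αk βk, rot3 (φs n) x k * Gw αj βj (x j)| := by
    intro n
    obtain ⟨hc, hcsn, hsup⟩ := hts n
    have hzero1 : ∀ x, x ∉ Ω → φs n x i = 0 := by
      intro x hx
      have : φs n x = 0 := image_eq_zero_of_notMem_tsupport (fun h => hx (hsup h))
      rw [this]; rfl
    have hzero2 : ∀ x, x ∉ Ω → rot3 (φs n) x k * Gw αj βj (x j) = 0 := by
      intro x hx
      have : rot3 (φs n) x = 0 := rot3_eq_zero _ x (fun h => hx (hsup h))
      rw [this]; simp
    calc |∫ x in beam Ω j k αj βj αk βk, φs n x i|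
        = |∫ x : V3, φs n x i
            * ((Ioo αj βj).indicator 1 (x j) * (Ioo αk βk).indicator 1 (x k))| := by
          rw [hbeam, setIntegral_weight Ω _ hzero1 B' hB'm]
          congr 2
          funext x
          rw [hindB x]
      _ = |∫ x : V3, rot3 (φs n) x k
            * (Gw αj βj (x j) * (Ioo αk βk).indicator 1 (x k))| :=
          core (φs n) hc hcsn i j k hij hik hjk αj βj αk βk hj.le
      _ = |∫ x in slab Ω k αk βk, rot3 (φs n) x k * Gw αj βj (x j)| := by
          rw [hslab, setIntegral_weight Ω _ hzero2 S' hS'm]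
          congr 2
          funext x
          rw [hindS x]
          ring
  -- pass to the limit
  have h1 : Tendsto (fun n => ∫ x in beam Ω j k αj βj αk βk, φs n x i * (1:ℝ))
      atTop (𝓝 (∫ x in beam Ω j k αj βj αk βk, φ x i * (1:ℝ))) :=
    tendsto_setIntegral_L2 hvol hbm hbsub hL2φs hφ2 i measurable_const
      (C := 1) (fun x => by simp) hφconv
  have h2 : Tendsto (fun n => ∫ x in slab Ω k αk βk, rot3 (φs n) x k * Gw αj βj (x j))
      atTop (𝓝 (∫ x in slab Ω k αk βk, rφ x k * Gw αj βj (x j))) :=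
    tendsto_setIntegral_L2 hvol hsm hssub hL2rot hrφ2 k hGm
      (C := βj - αj) hGb hrconv
  simp_rw [mul_one] at h1
  have hABeq : |∫ x in beam Ω j k αj βj αk βk, φ x i|
      = |∫ x in slab Ω k αk βk, rφ x k * Gw αj βj (x j)| := by
    have heq2 : (fun n => |∫ x in beam Ω j k αj βj αk βk, φs n x i|)
        = fun n => |∫ x in slab Ω k αk βk, rot3 (φs n) x k * Gw αj βj (x j)| := funext hiden
    have e1 := h1.abs
    rw [heq2] at e1
    exact tendsto_nhds_unique e1 h2.abs
  -- final estimate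
  haveI instS : IsFiniteMeasure (volume.restrict (slab Ω k αk βk)) := by
    constructor; rw [Measure.restrict_apply_univ]
    exact (measure_mono hssub).trans_lt hvol
  have hrk : Integrable (fun x => rφ x k) (volume.restrict (slab Ω k αk βk)) := by
    have h3 : MemLp (fun x => rφ x k) 2 (volume.restrict Ω) :=
      (ContinuousLinearMap.proj (R := ℝ) (φ := fun _ : Fin 3 => ℝ) k).comp_memLp' hrφ2
    have h4 : (volume : Measure V3).restrict (slab Ω k αk βk)
        = (volume.restrict Ω).restrict (slab Ω k αk βk) := by
      rw [Measure.restrict_restrict hsm, inter_eq_self_of_subset_left hssub]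
    rw [h4]
    exact (h3.restrict _).integrable one_le_two
  have hprod : Integrable (fun x => |rφ x k| * Gw αj βj (x j))
      (volume.restrict (slab Ω k αk βk)) := by
    have := hrk.abs.bdd_mul (hGm.aestronglyMeasurable)
      (ae_of_all _ fun x => by simpa [Real.norm_eq_abs] using hGb x)
    exact this.congr (Filter.Eventually.of_forall fun x => mul_comm _ _)
  rw [hABeq]
  calc |∫ x in slab Ω k αk βk, rφ x k * Gw αj βj (x j)|
      ≤ ∫ x in slab Ω k αk βk, |rφ x k| * |Gw αj βj (x j)| := by
        simpa [Real.norm_eq_abs, abs_mul] using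
          norm_integral_le_integral_norm (μ := volume.restrict (slab Ω k αk βk))
            (fun x => rφ x k * Gw αj βj (x j))
    _ = ∫ x in slab Ω k αk βk, |rφ x k| * Gw αj βj (x j) := by
        congr 1; funext x
        rw [abs_of_nonneg (Gw_nonneg _ _ _)]
    _ ≤ ∫ x in slab Ω k αk βk, |rφ x k| * (βj - αj) := by
        apply integral_mono hprod (hrk.abs.mul_const _)
        intro x
        exact mul_le_mul_of_nonneg_left (Gw_le _ _ _ hj.le) (abs_nonneg _)
    _ = (βj - αj) * ∫ x in slab Ω k αk βk, |rφ x k| := by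
        rw [integral_mul_const, mul_comm]
end
end
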